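/- arXiv:2407.03083 — 5 statements merged into one kernel-verified Lean document; each statement's English description precedes it below -/
import Mathlib

section
/- For every dimension d ≥ 1 there exists a constant c_d > 0, depending only on d, with the following property. Let α ∈ (0,1), r > 0, and let B be a closed ball of radius r in ℝ^d. Let u : ℝ^d → ℝ be twice differentiable on B with |u(x)| ≤ M for all x ∈ B, and suppose the second derivative D²u is α-Hölder with constant H on B. Then for every ε ∈ (0, r]: (i) ‖Du(x)‖ ≤ ε^{1+α}·H + (c_d/ε)·M for every x ∈ B; and (ii) ‖D²u(x)‖ ≤ ε^α·H + (c_d/ε²)·M for every x ∈ B. -/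
/-!
Suppose that on a ball of radius `δ` the second derivative of `u` stays within `κ` of a fixed
bilinear map `A`, and `‖u‖ ≤ M`. The mixed second difference of `u` over a square of side `δ / 2`
equals `A b a` up to `κ ‖a‖ ‖b‖`, which gives `‖A‖ ≤ κ + 16 M / δ²`; the central difference at the
centre gives `‖Du‖ ≤ M / δ + κ δ` there, and a first-order Taylor estimate spreads this to the
whole ball. Every point `x` of `B` lies in a ball of radius `ε / 4` contained in `B`, on which
Hölder continuity lets us take `A = D²u(x)` and `κ = H (ε / 2)^α`.
-/

open Metric Set

variable {E F : Type*} [NormedAddCommGroup E] [NormedSpace ℝ E] [NormedAddCommGroup F]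
  [NormedSpace ℝ F]

namespace ContinuousLinearMap

theorem opNorm_le_div_of_norm_eq {f : E →L[ℝ] F} {ρ C : ℝ} (hρ : 0 < ρ) (hC : 0 ≤ C)
    (hf : ∀ x, ‖x‖ = ρ → ‖f x‖ ≤ C) : ‖f‖ ≤ C / ρ := by
  refine opNorm_le_of_unit_norm (div_nonneg hC hρ.le) fun v hv => ?_
  have h := hf (ρ • v) (by rw [norm_smul, hv, Real.norm_of_nonneg hρ.le, mul_one])
  rw [map_smul, norm_smul, Real.norm_of_nonneg hρ.le] at h
  rwa [le_div_iff₀' hρ]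

end ContinuousLinearMap

theorem exists_mem_closedBall_subset_closedBall {x₀ x : E} {r δ : ℝ} (hδ : 0 < δ) (hδr : δ ≤ r)
    (hx : x ∈ closedBall x₀ r) :
    ∃ y, x ∈ closedBall y δ ∧ closedBall y δ ⊆ closedBall x₀ r := by
  have hr : 0 < r := hδ.trans_le hδr
  have hx' : ‖x - x₀‖ ≤ r := mem_closedBall_iff_norm.1 hx
  refine ⟨x₀ + (1 - δ / r) • (x - x₀), ?_, closedBall_subset_closedBall' ?_⟩
  · rw [mem_closedBall_iff_norm]
    calc ‖x - (x₀ + (1 - δ / r) • (x - x₀))‖ = (δ / r) * ‖x - x₀‖ := by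
          rw [show x - (x₀ + (1 - δ / r) • (x - x₀)) = (δ / r) • (x - x₀) by module,
            norm_smul, Real.norm_of_nonneg (by positivity)]
      _ ≤ (δ / r) * r := by gcongr
      _ = δ := div_mul_cancel₀ δ hr.ne'
  · have h1 : 0 ≤ 1 - δ / r := by rw [sub_nonneg, div_le_one hr]; exact hδr
    calc δ + dist (x₀ + (1 - δ / r) • (x - x₀)) x₀ = δ + (1 - δ / r) * ‖x - x₀‖ := by
          rw [dist_eq_norm, add_sub_cancel_left, norm_smul, Real.norm_of_nonneg h1]
      _ ≤ δ + (1 - δ / r) * r := by gcongr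
      _ = r := by field_simp; ring

theorem norm_second_difference_sub_le {s : Set E} (hs : Convex ℝ s) {u : E → F}
    {A : E →L[ℝ] E →L[ℝ] F} {κ : ℝ} (hu : ∀ z ∈ s, DifferentiableAt ℝ u z)
    (hu' : ∀ z ∈ s, DifferentiableAt ℝ (fderiv ℝ u) z)
    (hA : ∀ z ∈ s, ‖fderiv ℝ (fderiv ℝ u) z - A‖ ≤ κ) {y a b : E}
    (hy : y ∈ s) (ha : y + a ∈ s) (hb : y + b ∈ s) (hab : y + a + b ∈ s) :
    ‖u (y + a + b) - u (y + a) - u (y + b) + u y - A b a‖ ≤ κ * ‖b‖ * ‖a‖ := by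
  -- Mean value inequality for `z ↦ u (z + b) - u z`, whose derivative stays within `κ ‖b‖` of `A b`.
  set t := s ∩ (· + b) ⁻¹' s
  have hderiv : ∀ z ∈ t, HasFDerivWithinAt (fun z => u (z + b) - u z)
      (fderiv ℝ u (z + b) - fderiv ℝ u z) t z := fun z hz =>
    (((hasFDerivAt_comp_add_right b).2 (hu _ hz.2).hasFDerivAt).sub
      (hu z hz.1).hasFDerivAt).hasFDerivWithinAt
  have hbound : ∀ z ∈ t, ‖fderiv ℝ u (z + b) - fderiv ℝ u z - A b‖ ≤ κ * ‖b‖ := fun z hz => by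
    simpa only [add_sub_cancel_left] using
      hs.norm_image_sub_le_of_norm_fderiv_le' hu' hA hz.1 hz.2
  have h := (hs.inter (hs.translate_preimage_left b)).norm_image_sub_le_of_norm_hasFDerivWithin_le'
    hderiv hbound ⟨hy, hb⟩ ⟨ha, hab⟩
  rw [add_sub_cancel_left] at h
  convert h using 2
  abel

section Ball

variable {u : E → F} {A : E →L[ℝ] E →L[ℝ] F} {y : E} {δ κ M : ℝ}

theorem norm_central_difference_sub_le
    (hu : ∀ z ∈ closedBall y δ, DifferentiableAt ℝ u z)
    (hu' : ∀ z ∈ closedBall y δ, DifferentiableAt ℝ (fderiv ℝ u) z)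
    (hA : ∀ z ∈ closedBall y δ, ‖fderiv ℝ (fderiv ℝ u) z - A‖ ≤ κ) {h : E} (hh : ‖h‖ ≤ δ) :
    ‖u (y + h) - u (y - h) - (2 : ℝ) • fderiv ℝ u y h‖ ≤ 2 * κ * δ * ‖h‖ := by
  set B := closedBall y δ
  have hrefl : ∀ z ∈ B, y - (z - y) ∈ B := fun z hz => by
    rwa [mem_closedBall_iff_norm, sub_sub_cancel_left, norm_neg, ← mem_closedBall_iff_norm]
  have hyB : y ∈ B := mem_closedBall_self ((norm_nonneg h).trans hh)
  have hκ : 0 ≤ κ := (norm_nonneg (fderiv ℝ (fderiv ℝ u) y - A)).trans (hA y hyB)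
  have hderiv : ∀ z ∈ B, HasFDerivWithinAt (fun z => u z - u (y - (z - y)))
      (fderiv ℝ u z + fderiv ℝ u (y - (z - y))) B z := fun z hz => by
    have hrefl' : HasFDerivAt (fun z => y - (z - y)) (-ContinuousLinearMap.id ℝ E) z := by
      simpa using ((hasFDerivAt_id z).sub_const y).const_sub y
    convert ((hu z hz).hasFDerivAt.sub
      ((hu _ (hrefl z hz)).hasFDerivAt.comp z hrefl')).hasFDerivWithinAt using 1
    · rfl
    rw [ContinuousLinearMap.comp_neg, ContinuousLinearMap.comp_id, sub_neg_eq_add]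
  -- The reflection `z ↦ 2y - z` makes the second-order terms `A (z - y)` cancel.
  have hbound : ∀ z ∈ B, ‖fderiv ℝ u z + fderiv ℝ u (y - (z - y)) - (2 : ℝ) • fderiv ℝ u y‖
      ≤ 2 * κ * δ := fun z hz => by
    have hz' : ‖z - y‖ ≤ δ := mem_closedBall_iff_norm.1 hz
    have h₁ := (convex_closedBall y δ).norm_image_sub_le_of_norm_fderiv_le' hu' hA hyB hz
    have h₂ := (convex_closedBall y δ).norm_image_sub_le_of_norm_fderiv_le' hu' hA hyB
      (hrefl z hz)
    rw [sub_sub_cancel_left, norm_neg, map_neg] at h₂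
    calc ‖fderiv ℝ u z + fderiv ℝ u (y - (z - y)) - (2 : ℝ) • fderiv ℝ u y‖
        = ‖(fderiv ℝ u z - fderiv ℝ u y - A (z - y))
            + (fderiv ℝ u (y - (z - y)) - fderiv ℝ u y - -A (z - y))‖ := by
          congr 1; module
      _ ≤ κ * ‖z - y‖ + κ * ‖z - y‖ := norm_add_le_of_le h₁ h₂
      _ ≤ 2 * κ * δ := by linarith [mul_le_mul_of_nonneg_left hz' hκ]
  have h := (convex_closedBall y δ).norm_image_sub_le_of_norm_hasFDerivWithin_le' hderiv hbound
    hyB (show y + h ∈ B by simpa [B] using hh)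
  simpa using h

theorem norm_le_of_norm_fderiv_fderiv_sub_le (hδ : 0 < δ)
    (hu : ∀ z ∈ closedBall y δ, DifferentiableAt ℝ u z)
    (hu' : ∀ z ∈ closedBall y δ, DifferentiableAt ℝ (fderiv ℝ u) z)
    (hM : ∀ z ∈ closedBall y δ, ‖u z‖ ≤ M)
    (hA : ∀ z ∈ closedBall y δ, ‖fderiv ℝ (fderiv ℝ u) z - A‖ ≤ κ) :
    ‖A‖ ≤ κ + 16 * M / δ ^ 2 := by
  set ρ := δ / 2
  have hρ : 0 < ρ := half_pos hδ
  have hρδ : ρ + ρ = δ := add_halves δ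
  have hyB : y ∈ closedBall y δ := mem_closedBall_self hδ.le
  have hκ : 0 ≤ κ := (norm_nonneg (fderiv ℝ (fderiv ℝ u) y - A)).trans (hA y hyB)
  have hM₀ : 0 ≤ M := (norm_nonneg _).trans (hM y hyB)
  have hmem : ∀ v, ‖v‖ ≤ δ → y + v ∈ closedBall y δ := fun v hv => by
    rwa [mem_closedBall_iff_norm, add_sub_cancel_left]
  have hcorner : ∀ a b : E, ‖a‖ = ρ → ‖b‖ = ρ → ‖A b a‖ ≤ 4 * M + κ * ρ * ρ := by
    intro a b ha hb
    have hab : ‖a + b‖ ≤ δ := (norm_add_le a b).trans (by rw [ha, hb]; linarith)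
    have hya := hmem a (by linarith)
    have hyb := hmem b (by linarith)
    have hyab : y + a + b ∈ closedBall y δ := by rw [add_assoc]; exact hmem _ hab
    have hD := norm_second_difference_sub_le (convex_closedBall y δ) hu hu' hA hyB hya hyb hyab
    rw [ha, hb] at hD
    calc ‖A b a‖ = ‖(u (y + a + b) - u (y + a) - u (y + b) + u y)
          - (u (y + a + b) - u (y + a) - u (y + b) + u y - A b a)‖ := by rw [sub_sub_cancel]
      _ ≤ (M + M + M + M) + κ * ρ * ρ := norm_sub_le_of_le (norm_add_le_of_le
          (norm_sub_le_of_le (norm_sub_le_of_le (hM _ hyab) (hM _ hya)) (hM _ hyb)) (hM y hyB)) hD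
      _ = 4 * M + κ * ρ * ρ := by ring
  have hC : 0 ≤ 4 * M + κ * ρ * ρ := by positivity
  calc ‖A‖ ≤ (4 * M + κ * ρ * ρ) / ρ / ρ :=
        ContinuousLinearMap.opNorm_le_div_of_norm_eq hρ (by positivity) fun b hb =>
          ContinuousLinearMap.opNorm_le_div_of_norm_eq hρ hC fun a ha => hcorner a b ha hb
    _ = κ + 16 * M / δ ^ 2 := by field_simp; ring

theorem norm_fderiv_center_le (hδ : 0 < δ)
    (hu : ∀ z ∈ closedBall y δ, DifferentiableAt ℝ u z)
    (hu' : ∀ z ∈ closedBall y δ, DifferentiableAt ℝ (fderiv ℝ u) z)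
    (hM : ∀ z ∈ closedBall y δ, ‖u z‖ ≤ M)
    (hA : ∀ z ∈ closedBall y δ, ‖fderiv ℝ (fderiv ℝ u) z - A‖ ≤ κ) :
    ‖fderiv ℝ u y‖ ≤ M / δ + κ * δ := by
  have hyB : y ∈ closedBall y δ := mem_closedBall_self hδ.le
  have hκ : 0 ≤ κ := (norm_nonneg (fderiv ℝ (fderiv ℝ u) y - A)).trans (hA y hyB)
  have hM₀ : 0 ≤ M := (norm_nonneg _).trans (hM y hyB)
  have hbound : ∀ h : E, ‖h‖ = δ → ‖fderiv ℝ u y h‖ ≤ M + κ * δ ^ 2 := fun h hh => by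
    have hD := norm_central_difference_sub_le hu hu' hA hh.le
    have hadd : y + h ∈ closedBall y δ := by
      rw [mem_closedBall_iff_norm, add_sub_cancel_left, hh]
    have hsub : y - h ∈ closedBall y δ := by
      rw [mem_closedBall_iff_norm, sub_sub_cancel_left, norm_neg, hh]
    have h2 : ‖(2 : ℝ) • fderiv ℝ u y h‖ ≤ M + M + 2 * κ * δ * ‖h‖ := by
      rw [← sub_sub_cancel (u (y + h) - u (y - h)) ((2 : ℝ) • fderiv ℝ u y h)]
      exact norm_sub_le_of_le (norm_sub_le_of_le (hM _ hadd) (hM _ hsub)) hD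
    rw [norm_smul, Real.norm_two, hh] at h2
    linarith
  calc ‖fderiv ℝ u y‖ ≤ (M + κ * δ ^ 2) / δ :=
        ContinuousLinearMap.opNorm_le_div_of_norm_eq hδ (by positivity) hbound
    _ = M / δ + κ * δ := by field_simp

theorem norm_fderiv_le_of_mem_closedBall (hδ : 0 < δ)
    (hu : ∀ z ∈ closedBall y δ, DifferentiableAt ℝ u z)
    (hu' : ∀ z ∈ closedBall y δ, DifferentiableAt ℝ (fderiv ℝ u) z)
    (hM : ∀ z ∈ closedBall y δ, ‖u z‖ ≤ M)
    (hA : ∀ z ∈ closedBall y δ, ‖fderiv ℝ (fderiv ℝ u) z - A‖ ≤ κ) {x : E}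
    (hx : x ∈ closedBall y δ) :
    ‖fderiv ℝ u x‖ ≤ 3 * κ * δ + 17 * M / δ := by
  have hxy : ‖x - y‖ ≤ δ := mem_closedBall_iff_norm.1 hx
  have hyB : y ∈ closedBall y δ := mem_closedBall_self hδ.le
  have hκ : 0 ≤ κ := (norm_nonneg (fderiv ℝ (fderiv ℝ u) y - A)).trans (hA y hyB)
  have hM₀ : 0 ≤ M := (norm_nonneg _).trans (hM y hyB)
  have hTaylor : ‖fderiv ℝ u x - fderiv ℝ u y - A (x - y)‖ ≤ κ * δ :=
    ((convex_closedBall y δ).norm_image_sub_le_of_norm_fderiv_le' hu' hA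
      hyB hx).trans (by gcongr)
  have hlin : ‖A (x - y)‖ ≤ (κ + 16 * M / δ ^ 2) * δ :=
    (A.le_opNorm _).trans (mul_le_mul (norm_le_of_norm_fderiv_fderiv_sub_le hδ hu hu' hM hA) hxy
      (norm_nonneg _) (by positivity))
  calc ‖fderiv ℝ u x‖
      = ‖(fderiv ℝ u x - fderiv ℝ u y - A (x - y)) + A (x - y) + fderiv ℝ u y‖ := by abel_nf
    _ ≤ κ * δ + (κ + 16 * M / δ ^ 2) * δ + (M / δ + κ * δ) :=
        norm_add₃_le.trans (add_le_add_three hTaylor hlin (norm_fderiv_center_le hδ hu hu' hM hA))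
    _ = 3 * κ * δ + 17 * M / δ := by field_simp; ring

end Ball

theorem nonneg_of_norm_sub_le_mul_rpow [Nontrivial E] {G : Type*} [SeminormedAddCommGroup G]
    {g : E → G} {x₀ : E} {r H α : ℝ} (hr : 0 < r)
    (hg : ∀ x ∈ closedBall x₀ r, ∀ y ∈ closedBall x₀ r, ‖g x - g y‖ ≤ H * ‖x - y‖ ^ α) :
    0 ≤ H := by
  obtain ⟨v, hv⟩ := exists_norm_eq E hr.le
  have h := hg (x₀ + v) (by rw [mem_closedBall_iff_norm, add_sub_cancel_left, hv])
    x₀ (mem_closedBall_self hr.le)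
  rw [add_sub_cancel_left, hv] at h
  exact nonneg_of_mul_nonneg_left ((norm_nonneg _).trans h) (Real.rpow_pos_of_pos hr α)

theorem norm_fderiv_le_and_norm_fderiv_fderiv_le_of_holder {u : E → F} {x₀ : E}
    {r α H M ε : ℝ} (hα : 0 ≤ α) (hH : 0 ≤ H) (hε : 0 < ε) (hεr : ε ≤ r)
    (hu : ∀ x ∈ closedBall x₀ r, DifferentiableAt ℝ u x)
    (hu' : ∀ x ∈ closedBall x₀ r, DifferentiableAt ℝ (fderiv ℝ u) x)
    (hM : ∀ x ∈ closedBall x₀ r, ‖u x‖ ≤ M)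
    (hHol : ∀ x ∈ closedBall x₀ r, ∀ y ∈ closedBall x₀ r,
      ‖fderiv ℝ (fderiv ℝ u) x - fderiv ℝ (fderiv ℝ u) y‖ ≤ H * ‖x - y‖ ^ α)
    {x : E} (hx : x ∈ closedBall x₀ r) :
    ‖fderiv ℝ u x‖ ≤ ε ^ (1 + α) * H + 68 / ε * M ∧
      ‖fderiv ℝ (fderiv ℝ u) x‖ ≤ ε ^ α * H + 256 / ε ^ 2 * M := by
  obtain ⟨y, hxy, hsub⟩ :=
    exists_mem_closedBall_subset_closedBall (δ := ε / 4) (by positivity) (by linarith) hx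
  have hA : ∀ z ∈ closedBall y (ε / 4),
      ‖fderiv ℝ (fderiv ℝ u) z - fderiv ℝ (fderiv ℝ u) x‖ ≤ H * (ε / 2) ^ α := fun z hz => by
    have hzx : ‖z - x‖ ≤ ε / 2 := by
      rw [← dist_eq_norm]
      linarith [dist_triangle_right z x y, mem_closedBall.1 hz, mem_closedBall.1 hxy]
    exact (hHol z (hsub hz) x hx).trans (by gcongr)
  have hεα : (ε / 2) ^ α ≤ ε ^ α := by gcongr; linarith
  have hδ : 0 < ε / 4 := by positivity
  have hu₁ := fun z hz => hu z (hsub hz)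
  have hu₂ := fun z hz => hu' z (hsub hz)
  have hM₁ := fun z hz => hM z (hsub hz)
  constructor
  · calc ‖fderiv ℝ u x‖ ≤ 3 * (H * (ε / 2) ^ α) * (ε / 4) + 17 * M / (ε / 4) :=
          norm_fderiv_le_of_mem_closedBall hδ hu₁ hu₂ hM₁ hA hxy
      _ ≤ ε ^ (1 + α) * H + 68 / ε * M := by
          have hM' : 17 * M / (ε / 4) = 68 / ε * M := by field_simp; ring
          have hHα : H * (ε / 2) ^ α * ε ≤ H * ε ^ α * ε := by gcongr
          have hHα₀ : 0 ≤ H * (ε / 2) ^ α * ε := by positivity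
          rw [Real.rpow_add hε, Real.rpow_one, hM']
          linarith
  · calc ‖fderiv ℝ (fderiv ℝ u) x‖ ≤ H * (ε / 2) ^ α + 16 * M / (ε / 4) ^ 2 :=
          norm_le_of_norm_fderiv_fderiv_sub_le hδ hu₁ hu₂ hM₁ hA
      _ = H * (ε / 2) ^ α + 256 / ε ^ 2 * M := by field_simp; ring
      _ ≤ ε ^ α * H + 256 / ε ^ 2 * M := by rw [mul_comm _ H]; gcongr

/-- Interpolation inequalities on balls for `C^{2+α}` functions: there is a dimensional
constant `c_d > 0` such that for every ball `B` of radius `r`, every `u` bounded by `M`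
on `B` whose second derivative is `α`-Hölder with constant `H` on `B`, and every
`ε ∈ (0, r]`, one has `‖Du‖ ≤ ε^{1+α} H + (c_d/ε) M` and
`‖D²u‖ ≤ ε^α H + (c_d/ε²) M` on `B`. -/
theorem interpolation_inequalities_C2alpha
    (d : ℕ) (hd : 1 ≤ d) :
    ∃ c : ℝ, 0 < c ∧
      ∀ (α r : ℝ), α ∈ Set.Ioo (0:ℝ) 1 → 0 < r →
      ∀ (x₀ : EuclideanSpace ℝ (Fin d)) (u : EuclideanSpace ℝ (Fin d) → ℝ) (M H : ℝ),
        (∀ x ∈ Metric.closedBall x₀ r, DifferentiableAt ℝ u x) →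
        (∀ x ∈ Metric.closedBall x₀ r, DifferentiableAt ℝ (fderiv ℝ u) x) →
        (∀ x ∈ Metric.closedBall x₀ r, |u x| ≤ M) →
        (∀ x ∈ Metric.closedBall x₀ r, ∀ y ∈ Metric.closedBall x₀ r,
          ‖fderiv ℝ (fderiv ℝ u) x - fderiv ℝ (fderiv ℝ u) y‖ ≤ H * ‖x - y‖ ^ α) →
        ∀ ε : ℝ, 0 < ε → ε ≤ r →
          (∀ x ∈ Metric.closedBall x₀ r,
            ‖fderiv ℝ u x‖ ≤ ε ^ (1 + α) * H + (c / ε) * M) ∧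
          (∀ x ∈ Metric.closedBall x₀ r,
            ‖fderiv ℝ (fderiv ℝ u) x‖ ≤ ε ^ α * H + (c / ε ^ 2) * M) := by
  have : NeZero d := ⟨by omega⟩
  refine ⟨256, by norm_num, fun α r hα hr x₀ u M H hu hu' hM hHol ε hε hεr => ?_⟩
  have hM₀ : 0 ≤ M := (abs_nonneg _).trans (hM x₀ (mem_closedBall_self hr.le))
  have hH : 0 ≤ H := nonneg_of_norm_sub_le_mul_rpow (g := fderiv ℝ (fderiv ℝ u)) hr hHol
  have hbounds := fun x (hx : x ∈ closedBall x₀ r) =>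
    norm_fderiv_le_and_norm_fderiv_fderiv_le_of_holder hα.1.le hH hε hεr hu hu'
      (by simpa only [Real.norm_eq_abs]) hHol hx
  refine ⟨fun x hx => (hbounds x hx).1.trans ?_, fun x hx => (hbounds x hx).2⟩
  gcongr
  norm_num
end

section
/- Let d ≥ 1 and let Ω ⊆ ℝ^d be a bounded open set satisfying the interior cone condition with opening angle θ ∈ (0, π/2] and height h > 0: for every x ∈ Ω there exists a unit vector e ∈ ℝ^d such that {x + y : y ∈ ℝ^d, 0 < ‖y‖ ≤ h, ⟨y, e⟩ ≥ ‖y‖·cos θ} ⊆ Ω. Let α ∈ (0,1). Then there exist constants c₇, c₈ > 0, depending only on d, θ and α, such that for every function u : ℝ^d → ℝ that is twice differentiable on Ω with |u(x)| ≤ M on Ω and whose second derivative D²u is α-Hölder with constant H on Ω, and for every ε ∈ (0, h]: sup_{x ∈ Ω} ‖Du(x)‖ ≤ ε^{1+α}·H + (c₇/ε)·M and sup_{x ∈ Ω} ‖D²u(x)‖ ≤ ε^α·H + (c₈/ε²)·M. -/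
/-!
Along a segment `t ↦ x + t • w`, `0 ≤ t ≤ L`, `‖w‖ = 1`, Taylor's formula with remainder
`H t^{2+α}`, evaluated at `t = L/2` and `t = L`, writes `Du(x) w` and `D²u(x)(w, w)` as finite
differences of values of `u` up to `O(H L^{2+α})`; hence `|Du(x) w| ≲ H L^{1+α} + M/L` and
`|D²u(x)(w, w)| ≲ H L^α + M/L²`. The cone condition provides such segments for all directions `w`
of a cone at `x`, and this cone contains a ball `closedBall e ρ` about its axis with `ρ` depending
only on `θ`. Linearity, resp. polarization of the symmetric form `D²u(x)`, then bounds the norm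
by a constant multiple of the directional bound. Finally take `L = ε / K` with `K ≥ 1` so large
(depending on `θ` and `α`) that the constant in front of `H` is absorbed.
-/

open scoped RealInnerProductSpace

open Set Metric Filter

lemma abs_le_mul_rpow_add_one_of_hasDerivAt {f f' : ℝ → ℝ} {C β L : ℝ} (hC : 0 ≤ C)
    (hβ : 0 ≤ β) (hf0 : f 0 = 0) (hf : ∀ t ∈ Icc 0 L, HasDerivAt f (f' t) t)
    (hf' : ∀ t ∈ Icc 0 L, |f' t| ≤ C * t ^ β) :
    ∀ t ∈ Icc 0 L, |f t| ≤ C * t ^ (β + 1) := by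
  intro t ht
  have hmvt := norm_image_sub_le_of_norm_deriv_le_segment' (f := f) (C := C * t ^ β)
    (fun s hs => (hf s ⟨hs.1, hs.2.trans ht.2⟩).hasDerivWithinAt)
    (fun s hs => (hf' s ⟨hs.1, hs.2.le.trans ht.2⟩).trans
      (mul_le_mul_of_nonneg_left (Real.rpow_le_rpow hs.1 hs.2.le hβ) hC)) t ⟨ht.1, le_rfl⟩
  rwa [hf0, sub_zero, sub_zero, Real.norm_eq_abs, mul_assoc,
    ← Real.rpow_add_one' ht.1 (by linarith)] at hmvt

lemma abs_taylor_remainder_two_le {ψ p q : ℝ → ℝ} {H α L : ℝ} (hH : 0 ≤ H) (hα : 0 ≤ α)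
    (hψ : ∀ t ∈ Icc 0 L, HasDerivAt ψ (p t) t) (hp : ∀ t ∈ Icc 0 L, HasDerivAt p (q t) t)
    (hq : ∀ t ∈ Icc 0 L, |q t - q 0| ≤ H * t ^ α) :
    ∀ t ∈ Icc 0 L, |ψ t - ψ 0 - p 0 * t - q 0 * t ^ 2 / 2| ≤ H * t ^ (α + 1 + 1) := by
  have hp₁ := abs_le_mul_rpow_add_one_of_hasDerivAt (f := fun t => p t - p 0 - q 0 * t) hH hα
    (by simp) (fun t ht => by
      simpa using ((hp t ht).sub_const (p 0)).fun_sub ((hasDerivAt_id t).const_mul (q 0))) hq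
  refine abs_le_mul_rpow_add_one_of_hasDerivAt hH (by linarith) (by simp) (fun t ht => ?_) hp₁
  exact ((((hψ t ht).sub_const (ψ 0)).fun_sub ((hasDerivAt_id t).const_mul (p 0))).fun_sub
    (((hasDerivAt_pow 2 t).const_mul (q 0)).div_const 2)).congr_deriv (by simp; ring)

lemma abs_mul_le_of_abs_taylor_remainder_two_le {ψ₀ ψ₁ ψ₂ a b L M R : ℝ}
    (h₀ : |ψ₀| ≤ M) (h₁ : |ψ₁| ≤ M) (h₂ : |ψ₂| ≤ M)
    (hr₁ : |ψ₁ - ψ₀ - a * (L / 2) - b * (L / 2) ^ 2 / 2| ≤ R)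
    (hr₂ : |ψ₂ - ψ₀ - a * L - b * L ^ 2 / 2| ≤ R) :
    |a * L| ≤ 8 * M + 5 * R ∧ |b * L ^ 2| ≤ 16 * M + 12 * R := by
  -- With `r₁, r₂` the two remainders: `a L = 4 ψ₁ - 3 ψ₀ - ψ₂ + (r₂ - 4 r₁)` and
  -- `b L² / 4 = ψ₀ - 2 ψ₁ + ψ₂ + (2 r₁ - r₂)`.
  obtain ⟨h₀l, h₀r⟩ := abs_le.mp h₀
  obtain ⟨h₁l, h₁r⟩ := abs_le.mp h₁
  obtain ⟨h₂l, h₂r⟩ := abs_le.mp h₂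
  obtain ⟨hr₁l, hr₁r⟩ := abs_le.mp hr₁
  obtain ⟨hr₂l, hr₂r⟩ := abs_le.mp hr₂
  exact ⟨abs_le.mpr ⟨by linarith, by linarith⟩, abs_le.mpr ⟨by linarith, by linarith⟩⟩

lemma abs_deriv_zero_le_of_abs_le_of_holder {ψ p q : ℝ → ℝ} {H α L M : ℝ} (hL : 0 < L) (hH : 0 ≤ H)
    (hα : 0 ≤ α) (hψ : ∀ t ∈ Icc 0 L, HasDerivAt ψ (p t) t)
    (hp : ∀ t ∈ Icc 0 L, HasDerivAt p (q t) t) (hM : ∀ t ∈ Icc 0 L, |ψ t| ≤ M)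
    (hq : ∀ t ∈ Icc 0 L, |q t - q 0| ≤ H * t ^ α) :
    |p 0| ≤ 5 * H * L ^ (1 + α) + 8 * M / L ∧ |q 0| ≤ 12 * H * L ^ α + 16 * M / L ^ 2 := by
  have hL₂ : L / 2 ∈ Icc 0 L := ⟨by linarith, by linarith⟩
  have hL₁ : L ∈ Icc 0 L := ⟨hL.le, le_rfl⟩
  have hL₀ : (0 : ℝ) ∈ Icc 0 L := ⟨le_rfl, hL.le⟩
  have hr := abs_taylor_remainder_two_le hH hα hψ hp hq
  have hmono : H * (L / 2) ^ (α + 1 + 1) ≤ H * L ^ (α + 1 + 1) :=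
    mul_le_mul_of_nonneg_left (Real.rpow_le_rpow hL₂.1 hL₂.2 (by linarith)) hH
  obtain ⟨hp₀, hq₀⟩ := abs_mul_le_of_abs_taylor_remainder_two_le (hM 0 hL₀) (hM _ hL₂) (hM L hL₁)
    ((hr _ hL₂).trans hmono) (hr L hL₁)
  have hpow₁ : L ^ (α + 1 + 1) = L ^ (1 + α) * L := by
    rw [Real.rpow_add_one' hL.le (by linarith), add_comm α]
  have hpow₂ : L ^ (α + 1 + 1) = L ^ α * L ^ 2 := by
    rw [Real.rpow_add_one' hL.le (by linarith), Real.rpow_add_one' hL.le (by linarith)]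
    ring
  rw [abs_mul, abs_of_pos hL, hpow₁] at hp₀
  rw [abs_mul, abs_of_pos (by positivity : 0 < L ^ 2), hpow₂] at hq₀
  constructor
  · rw [← mul_le_mul_iff_of_pos_right hL, add_mul, div_mul_cancel₀ _ hL.ne']
    linarith
  · rw [← mul_le_mul_iff_of_pos_right (by positivity : 0 < L ^ 2), add_mul,
      div_mul_cancel₀ _ (by positivity)]
    linarith

section NormedSpace

variable {E : Type*} [NormedAddCommGroup E] [NormedSpace ℝ E]

lemma abs_le_mul_norm_pow_of_forall_norm_eq_one {s : Set E}
    (hs : ∀ y ∈ s, ∀ r : ℝ, 0 < r → r • y ∈ s) {f : E → ℝ} {k : ℕ} (hk : k ≠ 0)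
    (hf : ∀ (r : ℝ) (y : E), f (r • y) = r ^ k * f y) {S : ℝ}
    (h : ∀ w ∈ s, ‖w‖ = 1 → |f w| ≤ S) : ∀ y ∈ s, |f y| ≤ S * ‖y‖ ^ k := by
  intro y hy
  rcases eq_or_ne y 0 with rfl | hy0
  · simpa [zero_pow hk] using hf 0 0
  have hny : 0 < ‖y‖ := norm_pos_iff.mpr hy0
  have hw := h _ (hs y hy _ (inv_pos.mpr hny)) (by simp [norm_smul, hny.ne'])
  rwa [hf, abs_mul, abs_of_pos (by positivity), inv_pow, inv_mul_le_iff₀ (by positivity),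
    mul_comm] at hw

lemma abs_fderiv_apply_le_of_segment_subset {Ω : Set E} {u : E → ℝ} {x w : E} {L M H α : ℝ}
    (hL : 0 < L) (hH : 0 ≤ H) (hα : 0 ≤ α) (hw : ‖w‖ = 1)
    (hseg : ∀ t ∈ Icc 0 L, x + t • w ∈ Ω)
    (hdiff : ∀ y ∈ Ω, DifferentiableAt ℝ u y)
    (hdiff2 : ∀ y ∈ Ω, DifferentiableAt ℝ (fderiv ℝ u) y)
    (hM : ∀ y ∈ Ω, |u y| ≤ M)
    (hHol : ∀ y ∈ Ω, ∀ z ∈ Ω,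
      ‖fderiv ℝ (fderiv ℝ u) y - fderiv ℝ (fderiv ℝ u) z‖ ≤ H * ‖y - z‖ ^ α) :
    |fderiv ℝ u x w| ≤ 5 * H * L ^ (1 + α) + 8 * M / L ∧
      |fderiv ℝ (fderiv ℝ u) x w w| ≤ 12 * H * L ^ α + 16 * M / L ^ 2 := by
  have hγ (t : ℝ) : HasDerivAt (fun t : ℝ => x + t • w) w t := by
    simpa using ((hasDerivAt_id t).smul_const w).const_add x
  have hq (t : ℝ) (ht : t ∈ Icc 0 L) :
      |fderiv ℝ (fderiv ℝ u) (x + t • w) w w - fderiv ℝ (fderiv ℝ u) (x + (0 : ℝ) • w) w w|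
        ≤ H * t ^ α := by
    have hx : x ∈ Ω := by simpa using hseg 0 ⟨le_rfl, hL.le⟩
    calc _ = ‖(fderiv ℝ (fderiv ℝ u) (x + t • w) - fderiv ℝ (fderiv ℝ u) x) w w‖ := by simp
      _ ≤ ‖fderiv ℝ (fderiv ℝ u) (x + t • w) - fderiv ℝ (fderiv ℝ u) x‖ * ‖w‖ * ‖w‖ :=
        ContinuousLinearMap.le_opNorm₂ _ _ _
      _ ≤ H * t ^ α := by
        simpa [hw, norm_smul, abs_of_nonneg ht.1] using hHol _ (hseg t ht) x hx
  have hψ (t : ℝ) (ht : t ∈ Icc 0 L) :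
      HasDerivAt (fun t => u (x + t • w)) (fderiv ℝ u (x + t • w) w) t :=
    (hdiff _ (hseg t ht)).hasFDerivAt.comp_hasDerivAt t (hγ t)
  have hp (t : ℝ) (ht : t ∈ Icc 0 L) :
      HasDerivAt (fun t => fderiv ℝ u (x + t • w) w) (fderiv ℝ (fderiv ℝ u) (x + t • w) w w) t := by
    have hDu : HasDerivAt (fun t => fderiv ℝ u (x + t • w))
        (fderiv ℝ (fderiv ℝ u) (x + t • w) w) t :=
      (hdiff2 _ (hseg t ht)).hasFDerivAt.comp_hasDerivAt t (hγ t)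
    simpa using hDu.clm_apply (hasDerivAt_const t w)
  simpa using abs_deriv_zero_le_of_abs_le_of_holder hL hH hα hψ hp (fun t ht => hM _ (hseg t ht)) hq

end NormedSpace

section InnerProductSpace

variable {E : Type*} [NormedAddCommGroup E] [InnerProductSpace ℝ E]

lemma norm_le_of_forall_norm_eq_one_abs_apply_self_le (B : E →L[ℝ] E →L[ℝ] ℝ)
    (hB : ∀ v w, B v w = B w v) {K : ℝ} (hK : 0 ≤ K) (h : ∀ v, ‖v‖ = 1 → |B v v| ≤ K) :
    ‖B‖ ≤ K := by
  have hQ := abs_le_mul_norm_pow_of_forall_norm_eq_one (s := univ) (f := fun v => B v v)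
    (fun _ _ _ _ => mem_univ _) two_ne_zero (fun r y => by simp; ring) (fun w _ => h w)
  refine B.opNorm_le_of_unit_norm hK fun v hv => (B v).opNorm_le_of_unit_norm hK fun w hw => ?_
  have hpol : 4 * B v w = B (v + w) (v + w) - B (v - w) (v - w) := by
    simp only [map_add, map_sub, add_apply, sub_apply, hB w v]
    ring
  have hpar : ‖v + w‖ ^ 2 + ‖v - w‖ ^ 2 = 4 := by
    rw [norm_add_sq_real, norm_sub_sq_real, hv, hw]; ring
  have h₁ := hQ (v + w) (mem_univ _)
  have h₂ := hQ (v - w) (mem_univ _)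
  rw [Real.norm_eq_abs]
  have : |4 * B v w| ≤ 4 * K := by
    rw [hpol]
    calc _ ≤ |B (v + w) (v + w)| + |B (v - w) (v - w)| := abs_sub _ _
      _ ≤ K * ‖v + w‖ ^ 2 + K * ‖v - w‖ ^ 2 := add_le_add h₁ h₂
      _ = 4 * K := by rw [← mul_add, hpar, mul_comm]
  rw [abs_mul, abs_of_pos four_pos] at this
  linarith

lemma norm_le_of_closedBall_subset_of_abs_apply_le {s : Set E}
    (hs : ∀ y ∈ s, ∀ r : ℝ, 0 < r → r • y ∈ s) {e : E} {ρ : ℝ} (hρ : 0 < ρ)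
    (hball : closedBall e ρ ⊆ s) (T : E →L[ℝ] ℝ) {S : ℝ} (hS : 0 ≤ S)
    (h : ∀ w ∈ s, ‖w‖ = 1 → |T w| ≤ S) : ‖T‖ ≤ (2 * ‖e‖ + ρ) / ρ * S := by
  have hT := abs_le_mul_norm_pow_of_forall_norm_eq_one hs one_ne_zero
    (fun r y => by simp) h
  refine T.opNorm_le_of_unit_norm (by positivity) fun v hv => ?_
  have hv' : e + ρ • v ∈ s := hball (by simp [norm_smul, hv, abs_of_pos hρ])
  have he : e ∈ s := hball (mem_closedBall_self hρ.le)
  have h₁ := hT _ hv'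
  have h₂ := hT _ he
  have hn : ‖e + ρ • v‖ ≤ ‖e‖ + ρ := by
    simpa [norm_smul, hv, abs_of_pos hρ] using norm_add_le e (ρ • v)
  rw [Real.norm_eq_abs, div_mul_eq_mul_div, le_div_iff₀ hρ]
  have hTv : |T v| * ρ = |T (e + ρ • v) - T e| := by
    simp [abs_mul, abs_of_pos hρ, mul_comm]
  rw [hTv]
  calc _ ≤ |T (e + ρ • v)| + |T e| := abs_sub _ _
    _ ≤ S * (‖e‖ + ρ) + S * ‖e‖ := by
      simp only [pow_one] at h₁ h₂
      linarith [mul_le_mul_of_nonneg_left hn hS]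
    _ = (2 * ‖e‖ + ρ) * S := by ring

lemma norm_le_of_closedBall_subset_of_abs_apply_self_le {s : Set E}
    (hs : ∀ y ∈ s, ∀ r : ℝ, 0 < r → r • y ∈ s) {e : E} {ρ : ℝ} (hρ : 0 < ρ)
    (hball : closedBall e ρ ⊆ s) (B : E →L[ℝ] E →L[ℝ] ℝ) (hB : ∀ v w, B v w = B w v)
    {S : ℝ} (hS : 0 ≤ S) (h : ∀ w ∈ s, ‖w‖ = 1 → |B w w| ≤ S) :
    ‖B‖ ≤ ((‖e‖ + ρ) ^ 2 + ‖e‖ ^ 2) / ρ ^ 2 * S := by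
  have hQ := abs_le_mul_norm_pow_of_forall_norm_eq_one hs two_ne_zero (f := fun v => B v v)
    (fun r y => by simp; ring) h
  refine norm_le_of_forall_norm_eq_one_abs_apply_self_le B hB (by positivity) fun v hv => ?_
  have hn (σ : ℝ) (hσ : |σ| = ρ) : e + σ • v ∈ s ∧ ‖e + σ • v‖ ≤ ‖e‖ + ρ := by
    refine ⟨hball (by simp [norm_smul, hv, hσ]), ?_⟩
    simpa [norm_smul, hv, hσ] using norm_add_le e (σ • v)
  obtain ⟨hp, hpn⟩ := hn ρ (abs_of_pos hρ)
  obtain ⟨hm, hmn⟩ := hn (-ρ) (by simp [abs_of_pos hρ])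
  have hQp := (hQ _ hp).trans
    (mul_le_mul_of_nonneg_left (pow_le_pow_left₀ (norm_nonneg _) hpn 2) hS)
  have hQm := (hQ _ hm).trans
    (mul_le_mul_of_nonneg_left (pow_le_pow_left₀ (norm_nonneg _) hmn 2) hS)
  have h₀ := hQ e (hball (mem_closedBall_self hρ.le))
  have hsecond : 2 * ρ ^ 2 * B v v =
      B (e + ρ • v) (e + ρ • v) + B (e + (-ρ) • v) (e + (-ρ) • v) - 2 * B e e := by
    simp only [map_add, map_smul, add_apply, smul_apply, smul_eq_mul]
    ring
  rw [div_mul_eq_mul_div, le_div_iff₀ (by positivity)]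
  have : |2 * ρ ^ 2 * B v v| ≤ 2 * (S * ((‖e‖ + ρ) ^ 2 + ‖e‖ ^ 2)) := by
    rw [hsecond]
    calc _ ≤ |B (e + ρ • v) (e + ρ • v)| + |B (e + (-ρ) • v) (e + (-ρ) • v)| + |2 * B e e| :=
          (abs_sub _ _).trans (add_le_add_left (abs_add_le _ _) _)
      _ ≤ _ := by rw [abs_mul, abs_two]; linarith
  rw [abs_mul, abs_of_pos (by positivity : (0 : ℝ) < 2 * ρ ^ 2)] at this
  linarith

def directionCone (e : E) (c : ℝ) : Set E := {y | ‖y‖ * c ≤ ⟪y, e⟫}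

lemma smul_mem_directionCone {e y : E} {c r : ℝ} (hy : y ∈ directionCone e c) (hr : 0 ≤ r) :
    r • y ∈ directionCone e c := by
  simp only [directionCone, mem_ofPred_eq, norm_smul, Real.norm_eq_abs, abs_of_nonneg hr,
    real_inner_smul_left, mul_assoc] at hy ⊢
  exact mul_le_mul_of_nonneg_left hy hr

-- For `c = cos θ` the radius is `tan² (θ / 2)`, the largest one that works.
lemma closedBall_subset_directionCone {e : E} {c : ℝ} (he : ‖e‖ = 1) (hc : 0 ≤ c) :
    closedBall e ((1 - c) / (1 + c)) ⊆ directionCone e c := by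
  intro y hy
  rw [mem_closedBall, dist_eq_norm] at hy
  have hny : ‖y‖ ≤ 1 + (1 - c) / (1 + c) := by
    have := norm_le_norm_add_norm_sub' y e
    rw [he] at this
    linarith
  have hinner : 1 - (1 - c) / (1 + c) ≤ ⟪y, e⟫ := by
    have := real_inner_le_norm (e - y) e
    rw [inner_sub_left, real_inner_self_eq_norm_sq, he, norm_sub_rev, mul_one] at this
    linarith
  calc ‖y‖ * c ≤ (1 + (1 - c) / (1 + c)) * c := mul_le_mul_of_nonneg_right hny hc
    _ = 1 - (1 - c) / (1 + c) := by field_simp; ring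
    _ ≤ ⟪y, e⟫ := hinner

lemma add_smul_mem_of_cone_condition {Ω : Set E} {x e w : E} {c h L : ℝ} (hx : x ∈ Ω)
    (hcone : ∀ y : E, 0 < ‖y‖ → ‖y‖ ≤ h → ‖y‖ * c ≤ ⟪y, e⟫ → x + y ∈ Ω)
    (hw : w ∈ directionCone e c) (hw1 : ‖w‖ = 1) (hLh : L ≤ h) :
    ∀ t ∈ Icc 0 L, x + t • w ∈ Ω := by
  rintro t ⟨ht0, htL⟩
  rcases ht0.eq_or_lt with rfl | ht0
  · simpa using hx
  have hnt : ‖t • w‖ = t := by rw [norm_smul, hw1, Real.norm_eq_abs, abs_of_pos ht0, mul_one]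
  exact hcone _ (by rwa [hnt]) (by rw [hnt]; linarith) (smul_mem_directionCone hw ht0.le)

lemma norm_fderiv_le_of_cone_condition {Ω : Set E} (hΩ : IsOpen Ω) {u : E → ℝ} {x e : E}
    {c ρ h L M H α : ℝ} (hx : x ∈ Ω) (hρ : 0 < ρ) (hball : closedBall e ρ ⊆ directionCone e c)
    (hcone : ∀ y : E, 0 < ‖y‖ → ‖y‖ ≤ h → ‖y‖ * c ≤ ⟪y, e⟫ → x + y ∈ Ω)
    (hL : 0 < L) (hLh : L ≤ h) (hH : 0 ≤ H) (hα : 0 ≤ α)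
    (hdiff : ∀ y ∈ Ω, DifferentiableAt ℝ u y)
    (hdiff2 : ∀ y ∈ Ω, DifferentiableAt ℝ (fderiv ℝ u) y)
    (hM : ∀ y ∈ Ω, |u y| ≤ M)
    (hHol : ∀ y ∈ Ω, ∀ z ∈ Ω,
      ‖fderiv ℝ (fderiv ℝ u) y - fderiv ℝ (fderiv ℝ u) z‖ ≤ H * ‖y - z‖ ^ α) :
    ‖fderiv ℝ u x‖ ≤ (2 * ‖e‖ + ρ) / ρ * (5 * H * L ^ (1 + α) + 8 * M / L) ∧
      ‖fderiv ℝ (fderiv ℝ u) x‖ ≤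
        ((‖e‖ + ρ) ^ 2 + ‖e‖ ^ 2) / ρ ^ 2 * (12 * H * L ^ α + 16 * M / L ^ 2) := by
  have hM0 : 0 ≤ M := (abs_nonneg _).trans (hM x hx)
  have hdir (w : E) (hw : w ∈ directionCone e c) (hw1 : ‖w‖ = 1) :=
    abs_fderiv_apply_le_of_segment_subset hL hH hα hw1
      (add_smul_mem_of_cone_condition hx hcone hw hw1 hLh) hdiff hdiff2 hM hHol
  have hsymm : ∀ v w, fderiv ℝ (fderiv ℝ u) x v w = fderiv ℝ (fderiv ℝ u) x w v :=
    second_derivative_symmetric_of_eventually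
      (eventually_of_mem (hΩ.mem_nhds hx) fun y hy => (hdiff y hy).hasFDerivAt)
      (hdiff2 x hx).hasFDerivAt
  have hs : ∀ y ∈ directionCone e c, ∀ r : ℝ, 0 < r → r • y ∈ directionCone e c :=
    fun y hy r hr => smul_mem_directionCone hy hr.le
  exact ⟨norm_le_of_closedBall_subset_of_abs_apply_le hs hρ hball _ (by positivity)
      fun w hw hw1 => (hdir w hw hw1).1,
    norm_le_of_closedBall_subset_of_abs_apply_self_le hs hρ hball _ hsymm (by positivity)
      fun w hw hw1 => (hdir w hw hw1).2⟩

end InnerProductSpace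

lemma mul_add_div_le_of_le_rpow {C A B H M ε K γ : ℝ} {k : ℕ} (hH : 0 ≤ H) (hε : 0 < ε)
    (hK : 0 < K) (hCA : C * A ≤ K ^ γ) :
    C * (A * H * (ε / K) ^ γ + B * M / (ε / K) ^ k) ≤ ε ^ γ * H + C * B * K ^ k / ε ^ k * M := by
  have hKγ : 0 < K ^ γ := Real.rpow_pos_of_pos hK γ
  have hHε : 0 ≤ ε ^ γ * H := mul_nonneg (Real.rpow_nonneg hε.le γ) hH
  rw [Real.div_rpow hε.le hK.le, div_pow, mul_add]
  refine add_le_add ?_ (le_of_eq (by field_simp))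
  rw [show C * (A * H * (ε ^ γ / K ^ γ)) = C * A * (ε ^ γ * H) / K ^ γ by ring,
    div_le_iff₀ hKγ, mul_comm (ε ^ γ * H)]
  exact mul_le_mul_of_nonneg_right hCA hHε

theorem interpolation_inequalities_cone_condition_general
    (d : ℕ) (θ : ℝ) (hθ0 : 0 < θ) (hθ1 : θ ≤ Real.pi / 2)
    (α : ℝ) (hα : α ∈ Set.Ioo (0:ℝ) 1) :
    ∃ c₇ : ℝ, 0 < c₇ ∧ ∃ c₈ : ℝ, 0 < c₈ ∧
      ∀ (Ω : Set (EuclideanSpace ℝ (Fin d))) (h : ℝ), 0 < h →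
        IsOpen Ω → Bornology.IsBounded Ω →
        (∀ x ∈ Ω, ∃ e : EuclideanSpace ℝ (Fin d), ‖e‖ = 1 ∧
          ∀ y : EuclideanSpace ℝ (Fin d), 0 < ‖y‖ → ‖y‖ ≤ h →
            ‖y‖ * Real.cos θ ≤ ⟪y, e⟫ → x + y ∈ Ω) →
        ∀ (u : EuclideanSpace ℝ (Fin d) → ℝ) (M H : ℝ),
          (∀ x ∈ Ω, DifferentiableAt ℝ u x) →
          (∀ x ∈ Ω, DifferentiableAt ℝ (fderiv ℝ u) x) →
          (∀ x ∈ Ω, |u x| ≤ M) →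
          (∀ x ∈ Ω, ∀ y ∈ Ω,
            ‖fderiv ℝ (fderiv ℝ u) x - fderiv ℝ (fderiv ℝ u) y‖ ≤ H * ‖x - y‖ ^ α) →
          ∀ ε : ℝ, 0 < ε → ε ≤ h →
            (∀ x ∈ Ω, ‖fderiv ℝ u x‖ ≤ ε ^ (1 + α) * H + (c₇ / ε) * M) ∧
            (∀ x ∈ Ω, ‖fderiv ℝ (fderiv ℝ u) x‖ ≤ ε ^ α * H + (c₈ / ε ^ 2) * M) := by
  have hc0 : 0 ≤ Real.cos θ := Real.cos_nonneg_of_mem_Icc ⟨by linarith [Real.pi_pos], hθ1⟩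
  have hc1 : Real.cos θ < 1 := by
    simpa using Real.cos_lt_cos_of_nonneg_of_le_pi le_rfl (by linarith [Real.pi_pos]) hθ0
  set ρ := (1 - Real.cos θ) / (1 + Real.cos θ)
  have hρ : 0 < ρ := div_pos (by linarith) (by linarith)
  obtain ⟨K₇, hK₇1, hK₇⟩ := ((eventually_ge_atTop 1).and
    ((tendsto_rpow_atTop (by linarith [hα.1] : 0 < 1 + α)).eventually_ge_atTop
      ((2 + ρ) / ρ * 5))).exists
  obtain ⟨K₈, hK₈1, hK₈⟩ := ((eventually_ge_atTop 1).and
    ((tendsto_rpow_atTop hα.1).eventually_ge_atTop (((1 + ρ) ^ 2 + 1) / ρ ^ 2 * 12))).exists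
  refine ⟨(2 + ρ) / ρ * 8 * K₇, by positivity, ((1 + ρ) ^ 2 + 1) / ρ ^ 2 * 16 * K₈ ^ 2,
    by positivity, fun Ω h hh hΩ _ hcone u M H hdiff hdiff2 hM hHol ε hε hεh => ?_⟩
  suffices ∀ x ∈ Ω, ‖fderiv ℝ u x‖ ≤ ε ^ (1 + α) * H + ((2 + ρ) / ρ * 8 * K₇ / ε) * M ∧
      ‖fderiv ℝ (fderiv ℝ u) x‖ ≤ ε ^ α * H + (((1 + ρ) ^ 2 + 1) / ρ ^ 2 * 16 * K₈ ^ 2 / ε ^ 2) * M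
    from ⟨fun x hx => (this x hx).1, fun x hx => (this x hx).2⟩
  intro x hx
  obtain ⟨e, he, hxe⟩ := hcone x hx
  have hball := closedBall_subset_directionCone he hc0
  have hH : 0 ≤ H := by
    have hxh := add_smul_mem_of_cone_condition hx hxe (hball (mem_closedBall_self hρ.le)) he
      le_rfl h ⟨hh.le, le_rfl⟩
    have := hHol _ hxh x hx
    rw [add_sub_cancel_left, norm_smul, he, mul_one, Real.norm_of_nonneg hh.le] at this
    exact nonneg_of_mul_nonneg_left (this.trans' (by positivity)) (Real.rpow_pos_of_pos hh α)
  have hbound (K : ℝ) (hK : 1 ≤ K) := norm_fderiv_le_of_cone_condition hΩ hx hρ hball hxe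
    (by positivity : 0 < ε / K) ((div_le_self hε.le hK).trans hεh) hH hα.1.le
    hdiff hdiff2 hM hHol
  rw [he, one_pow, mul_one] at hbound
  exact ⟨(hbound K₇ hK₇1).1.trans <| by
      simpa only [pow_one] using mul_add_div_le_of_le_rpow (k := 1) hH hε (by positivity) hK₇,
    (hbound K₈ hK₈1).2.trans (mul_add_div_le_of_le_rpow hH hε (by positivity) hK₈)⟩

/-- Interpolation inequalities on bounded open sets satisfying the interior cone
condition with opening angle `θ` and height `h`: there are constants `c₇, c₈ > 0`
depending only on `d`, `θ` and `α` such that for every such domain `Ω`, every `u`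
bounded by `M` on `Ω` whose second derivative is `α`-Hölder with constant `H` on `Ω`,
and every `ε ∈ (0, h]`, one has `‖Du‖ ≤ ε^{1+α} H + (c₇/ε) M` and
`‖D²u‖ ≤ ε^α H + (c₈/ε²) M` on `Ω`. -/
theorem interpolation_inequalities_cone_condition
    (d : ℕ) (hd : 1 ≤ d) (θ : ℝ) (hθ0 : 0 < θ) (hθ1 : θ ≤ Real.pi / 2)
    (α : ℝ) (hα : α ∈ Set.Ioo (0:ℝ) 1) :
    ∃ c₇ : ℝ, 0 < c₇ ∧ ∃ c₈ : ℝ, 0 < c₈ ∧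
      ∀ (Ω : Set (EuclideanSpace ℝ (Fin d))) (h : ℝ), 0 < h →
        IsOpen Ω → Bornology.IsBounded Ω →
        (∀ x ∈ Ω, ∃ e : EuclideanSpace ℝ (Fin d), ‖e‖ = 1 ∧
          ∀ y : EuclideanSpace ℝ (Fin d), 0 < ‖y‖ → ‖y‖ ≤ h →
            ‖y‖ * Real.cos θ ≤ ⟪y, e⟫ → x + y ∈ Ω) →
        ∀ (u : EuclideanSpace ℝ (Fin d) → ℝ) (M H : ℝ),
          (∀ x ∈ Ω, DifferentiableAt ℝ u x) →
          (∀ x ∈ Ω, DifferentiableAt ℝ (fderiv ℝ u) x) →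
          (∀ x ∈ Ω, |u x| ≤ M) →
          (∀ x ∈ Ω, ∀ y ∈ Ω,
            ‖fderiv ℝ (fderiv ℝ u) x - fderiv ℝ (fderiv ℝ u) y‖ ≤ H * ‖x - y‖ ^ α) →
          ∀ ε : ℝ, 0 < ε → ε ≤ h →
            (∀ x ∈ Ω, ‖fderiv ℝ u x‖ ≤ ε ^ (1 + α) * H + (c₇ / ε) * M) ∧
            (∀ x ∈ Ω, ‖fderiv ℝ (fderiv ℝ u) x‖ ≤ ε ^ α * H + (c₈ / ε ^ 2) * M) :=
  interpolation_inequalities_cone_condition_general d θ hθ0 hθ1 α hα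
end

section
/- Let d ≥ 1 and let Ω ⊆ ℝ^d be a nonempty bounded connected open set whose topological boundary ∂Ω is the union of two disjoint nonempty sets Γ and Σ. Let v : ℝ^d → ℝ be continuous on the closure of Ω and harmonic on Ω, with v(x) = 0 for every x ∈ Γ. Let ν : Σ → ℝ^d be such that for every x ∈ Σ there exists δ > 0 with x − t·ν(x) ∈ Ω for all t ∈ (0, δ), and assume that for every x ∈ Σ the one-sided limit ∂v/∂ν(x) := lim_{t→0⁺} (v(x) − v(x − t·ν(x)))/t exists and is strictly positive. Then v(x) > 0 for every x ∈ Ω. -/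
/-!
The weak minimum principle puts the minimum of `v` over `closure Ω` on `∂Ω = Γ ∪ Σ`. At a
point of `Σ` the positive flux says that `v` strictly increases as one moves out of `Ω`, so the
minimum cannot sit there; it sits on `Γ`, where `v = 0`, hence `v ≥ 0`. If `v` vanished at some
point of `Ω`, the strong minimum principle would make `v ≡ 0` on `Ω`, hence on `Σ`, and the flux
would vanish. Both principles come from comparing `v` with the Gaussian barrier
`exp (-α ‖y - p‖²)`, which is strictly subharmonic away from `p`: far from `Ω` for the weak
principle, and on an annulus around a ball touching the zero set of `v` (Hopf's lemma) for the
strong one.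
-/

open Filter Set Metric Topology InnerProductSpace Laplacian

theorem IsLocalMin.deriv_deriv_nonneg {g : ℝ → ℝ} {a : ℝ} (h : IsLocalMin g a)
    (hc : ContinuousAt g a) : 0 ≤ deriv (deriv g) a := by
  by_contra! hneg
  have hconst : g =ᶠ[𝓝 a] fun _ => g a :=
    (h.and (isLocalMax_of_deriv_deriv_neg hneg h.deriv_eq_zero hc)).mono
      fun _ hy => le_antisymm hy.2 hy.1
  simp [hconst.deriv.deriv_eq] at hneg

section NormedSpace

variable {E : Type*} [NormedAddCommGroup E] [NormedSpace ℝ E] {f : E → ℝ} {x : E}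

theorem IsLocalMin.fderiv_fderiv_apply_self_nonneg (h : IsLocalMin f x)
    (hf : ContDiffAt ℝ 2 f x) (u : E) : 0 ≤ fderiv ℝ (fun y => fderiv ℝ f y u) x u := by
  set ℓ : ℝ → E := fun t => x + t • u
  have hℓ : ∀ t, HasDerivAt ℓ u t := fun t => by
    simpa [ℓ] using ((hasDerivAt_id t).smul_const u).const_add x
  have hℓ0 : ℓ 0 = x := by simp [ℓ]
  have hderiv : deriv (f ∘ ℓ) =ᶠ[𝓝 0] fun t => fderiv ℝ f (ℓ t) u := by
    have hdiff : ∀ᶠ y in 𝓝 x, DifferentiableAt ℝ f y :=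
      (hf.eventually (by simp)).mono fun y hy => hy.differentiableAt two_ne_zero
    filter_upwards [(hℓ 0).continuousAt.eventually (hℓ0 ▸ hdiff)] with t ht
    exact (ht.hasFDerivAt.comp_hasDerivAt t (hℓ t)).deriv
  have hfd : DifferentiableAt ℝ (fun y => fderiv ℝ f y u) x :=
    ((hf.fderiv_right (m := 1) le_rfl).differentiableAt one_ne_zero).clm_apply
      (differentiableAt_const u)
  have hderiv2 :
      HasDerivAt (fun t => fderiv ℝ f (ℓ t) u) (fderiv ℝ (fun y => fderiv ℝ f y u) x u) 0 :=
    hfd.hasFDerivAt.comp_hasDerivAt_of_eq 0 (hℓ 0) hℓ0.symm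
  have hmin : IsLocalMin (f ∘ ℓ) 0 := (hℓ0 ▸ h).comp_continuous (hℓ 0).continuousAt
  have hcont : ContinuousAt (f ∘ ℓ) 0 := (hℓ0 ▸ hf.continuousAt).comp (hℓ 0).continuousAt
  simpa [hderiv.deriv_eq, hderiv2.deriv] using hmin.deriv_deriv_nonneg hcont

end NormedSpace

section Barrier

variable {E : Type*} [NormedAddCommGroup E] (p : E) (α : ℝ)

noncomputable def hopfBarrier (y : E) : ℝ := Real.exp (-α * ‖y - p‖ ^ 2)

theorem hopfBarrier_pos (y : E) : 0 < hopfBarrier p α y := Real.exp_pos _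

theorem hopfBarrier_le_one (hα : 0 ≤ α) (y : E) : hopfBarrier p α y ≤ 1 :=
  Real.exp_le_one_iff.2 (mul_nonpos_of_nonpos_of_nonneg (neg_nonpos.2 hα) (sq_nonneg _))

variable [InnerProductSpace ℝ E]

theorem contDiff_hopfBarrier : ContDiff ℝ 2 (hopfBarrier p α) :=
  Real.contDiff_exp.comp
    (contDiff_const.mul ((contDiff_norm_sq ℝ).comp (contDiff_id.sub contDiff_const)))

theorem hasFDerivAt_hopfBarrier (x : E) :
    HasFDerivAt (hopfBarrier p α) ((-2 * α * hopfBarrier p α x) • innerSL ℝ (x - p)) x := by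
  refine (((hasFDerivAt_id x).sub_const p).norm_sq.const_mul (-α)).exp.congr_fderiv ?_
  ext u
  simp [hopfBarrier]
  ring

theorem fderiv_fderiv_hopfBarrier_apply_self (x u : E) :
    fderiv ℝ (fun y => fderiv ℝ (hopfBarrier p α) y u) x u =
      hopfBarrier p α x * (4 * α ^ 2 * inner ℝ (x - p) u ^ 2 - 2 * α * ‖u‖ ^ 2) := by
  have hD : (fun y => fderiv ℝ (hopfBarrier p α) y u) =
      fun y => -2 * α * hopfBarrier p α y * inner ℝ (y - p) u := by
    ext y
    simp [(hasFDerivAt_hopfBarrier p α y).fderiv, inner_sub_left]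
  have hD' : HasFDerivAt (fun y => -2 * α * hopfBarrier p α y * inner ℝ (y - p) u) _ x :=
    ((hasFDerivAt_hopfBarrier p α x).const_mul (-2 * α)).fun_mul
      (((hasFDerivAt_id x).sub_const p).inner ℝ (hasFDerivAt_const u x))
  rw [hD, hD'.fderiv]
  simp [inner_sub_left]
  ring

variable [FiniteDimensional ℝ E] {f : E → ℝ} {x : E}

theorem laplacian_eq_sum_fderiv_fderiv_apply (hf : ContDiffAt ℝ 2 f x) {ι : Type*} [Fintype ι]
    (b : OrthonormalBasis ι ℝ E) :
    Δ f x = ∑ i, fderiv ℝ (fun y => fderiv ℝ f y (b i)) x (b i) := by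
  have hfd : DifferentiableAt ℝ (fderiv ℝ f) x :=
    (hf.fderiv_right (m := 1) le_rfl).differentiableAt one_ne_zero
  simp [laplacian_eq_iteratedFDeriv_orthonormalBasis f b, iteratedFDeriv_two_apply,
    fderiv_clm_apply hfd (differentiableAt_const _)]

theorem IsLocalMin.laplacian_nonneg (h : IsLocalMin f x) (hf : ContDiffAt ℝ 2 f x) :
    0 ≤ Δ f x := by
  rw [laplacian_eq_sum_fderiv_fderiv_apply hf (stdOrthonormalBasis ℝ E)]
  exact Finset.sum_nonneg fun i _ => h.fderiv_fderiv_apply_self_nonneg hf _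

theorem laplacian_hopfBarrier (x : E) :
    Δ (hopfBarrier p α) x =
      hopfBarrier p α x * (4 * α ^ 2 * ‖x - p‖ ^ 2 - 2 * α * Module.finrank ℝ E) := by
  set b := stdOrthonormalBasis ℝ E
  rw [laplacian_eq_sum_fderiv_fderiv_apply (contDiff_hopfBarrier p α).contDiffAt b]
  have hsum : ∑ i, inner ℝ (x - p) (b i) ^ 2 = ‖x - p‖ ^ 2 := by
    rw [← real_inner_self_eq_norm_sq, ← b.sum_inner_mul_inner]
    exact Finset.sum_congr rfl fun i _ => by rw [sq, real_inner_comm (b i)]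
  simp only [fderiv_fderiv_hopfBarrier_apply_self, ← Finset.mul_sum, Finset.sum_sub_distrib,
    hsum, b.orthonormal.1, Finset.sum_const, Finset.card_univ, Fintype.card_fin]
  ring

theorem laplacian_hopfBarrier_pos (hα : 0 < α)
    (hx : Module.finrank ℝ E < 2 * α * ‖x - p‖ ^ 2) : 0 < Δ (hopfBarrier p α) x := by
  rw [laplacian_hopfBarrier]
  exact mul_pos (hopfBarrier_pos p α x) (by nlinarith [mul_pos hα (sub_pos.2 hx)])

end Barrier

theorem frontier_ball_sdiff_closedBall_subset {X : Type*} [PseudoMetricSpace X] (p : X)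
    (r s : ℝ) : frontier (ball p r \ closedBall p s) ⊆ sphere p r ∪ sphere p s := by
  have hcl : closure (ball p r \ closedBall p s) ⊆ closedBall p r \ ball p s :=
    closure_minimal
      (fun y hy => ⟨ball_subset_closedBall hy.1, fun h => hy.2 (ball_subset_closedBall h)⟩)
      (isClosed_closedBall.sdiff isOpen_ball)
  rw [(isOpen_ball.sdiff isClosed_closedBall).frontier_eq]
  rintro z ⟨hz, hzA⟩
  obtain ⟨hzr, hzs⟩ := hcl hz
  rw [mem_closedBall] at hzr
  rw [mem_ball, not_lt] at hzs
  rcases hzr.eq_or_lt with hzr | hzr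
  · exact Or.inl hzr
  · exact Or.inr (le_antisymm (by_contra fun h => hzA ⟨hzr, h⟩) hzs)

section MinimumPrinciple

variable {E : Type*} [NormedAddCommGroup E] [InnerProductSpace ℝ E] [FiniteDimensional ℝ E]
  {f v : E → ℝ} {O : Set E}

theorem exists_mem_frontier_isMinOn_of_laplacian_neg (hO : IsOpen O)
    (hOb : Bornology.IsBounded O) (hne : O.Nonempty) (hcont : ContinuousOn f (closure O))
    (hf : ContDiffOn ℝ 2 f O) (hΔ : ∀ x ∈ O, Δ f x < 0) :
    ∃ z ∈ frontier O, IsMinOn f (closure O) z := by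
  obtain ⟨z, hz, hmin⟩ := hOb.isCompact_closure.exists_isMinOn hne.closure hcont
  refine ⟨z, ?_, hmin⟩
  rw [hO.frontier_eq]
  refine ⟨hz, fun hzO => (hΔ z hzO).not_ge ?_⟩
  exact ((hmin.on_subset subset_closure).isLocalMin (hO.mem_nhds hzO)).laplacian_nonneg
    (hf.contDiffAt (hO.mem_nhds hzO))

theorem exists_mem_frontier_isMinOn_of_laplacian_nonpos [Nontrivial E] (hO : IsOpen O)
    (hOb : Bornology.IsBounded O) (hne : O.Nonempty) (hcont : ContinuousOn f (closure O))
    (hf : ContDiffOn ℝ 2 f O) (hΔ : ∀ x ∈ O, Δ f x ≤ 0) :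
    ∃ z ∈ frontier O, IsMinOn f (closure O) z := by
  set n : ℝ := (Module.finrank ℝ E : ℝ)
  obtain ⟨R, hR⟩ := hOb.subset_closedBall 0
  obtain ⟨p, hp⟩ := exists_norm_eq E (by positivity : 0 ≤ |R| + n + 1)
  have hfar : ∀ x ∈ O, n < 2 * 1 * ‖x - p‖ ^ 2 := fun x hx => by
    have hx' : ‖x‖ ≤ R := by simpa using hR hx
    have : n + 1 ≤ ‖x - p‖ := by
      have := norm_sub_norm_le p x
      rw [norm_sub_rev] at this
      linarith [le_abs_self R]
    nlinarith
  have hperturbed : ∀ ε : ℝ, 0 < ε → ∃ z ∈ frontier O,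
      IsMinOn (f - ε • hopfBarrier p 1) (closure O) z := fun ε hε =>
    exists_mem_frontier_isMinOn_of_laplacian_neg hO hOb hne
      (hcont.sub ((contDiff_hopfBarrier p 1).continuous.continuousOn.const_smul ε))
      (hf.sub ((contDiff_hopfBarrier p 1).const_smul ε).contDiffOn) fun x hx => by
        have hb := (contDiff_hopfBarrier p 1).contDiffAt (x := x)
        rw [(hf.contDiffAt (hO.mem_nhds hx)).laplacian_sub (f₂ := ε • hopfBarrier p 1)
          (hb.const_smul ε), laplacian_smul ε hb, smul_eq_mul]
        nlinarith [hΔ x hx, laplacian_hopfBarrier_pos p 1 one_pos (hfar x hx)]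
  obtain ⟨z₁, hz₁, -⟩ := hperturbed 1 one_pos
  obtain ⟨z, hz, hzmin⟩ := (hOb.isCompact_closure.of_isClosed_subset isClosed_frontier
    frontier_subset_closure).exists_isMinOn ⟨z₁, hz₁⟩ (hcont.mono frontier_subset_closure)
  refine ⟨z, hz, isMinOn_iff.2 fun y hy => le_of_forall_pos_le_add fun ε hε => ?_⟩
  obtain ⟨zε, hzε, hmin⟩ := hperturbed ε hε
  have hy := isMinOn_iff.1 hmin y hy
  have hzε := isMinOn_iff.1 hzmin zε hzε
  simp only [Pi.sub_apply, Pi.smul_apply, smul_eq_mul] at hy hzε ⊢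
  nlinarith [hopfBarrier_pos p 1 y, hopfBarrier_le_one p 1 zero_le_one zε]

variable {p x₀ : E} {r : ℝ}

theorem isMinOn_sub_smul_hopfBarrier {α ε : ℝ} (hr : 0 < r) (hx₀ : x₀ ∈ sphere p r)
    (hcont : ContinuousOn v (closedBall p r)) (hv : ContDiffOn ℝ 2 v (ball p r))
    (hΔ : ∀ y ∈ ball p r, Δ v y ≤ 0) (hmin : IsMinOn v (closedBall p r) x₀)
    (hα : 0 < α) (hαr : (Module.finrank ℝ E : ℝ) < 2 * α * (r / 2) ^ 2)
    (hε : 0 ≤ ε) (hinner : ∀ y ∈ sphere p (r / 2), v x₀ + ε ≤ v y) :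
    IsMinOn (v - ε • hopfBarrier p α) (ball p r \ closedBall p (r / 2)) x₀ := by
  have : Nontrivial E := nontrivial_of_ne x₀ p (ne_of_mem_sphere hx₀ hr.ne')
  set A := ball p r \ closedBall p (r / 2)
  have hAne : A.Nonempty := by
    refine ⟨p + (3 / 4 : ℝ) • (x₀ - p), ?_, ?_⟩ <;>
      simp [norm_smul, ← dist_eq_norm, mem_sphere.1 hx₀] <;> linarith
  have hb := contDiff_hopfBarrier p α
  obtain ⟨z, hz, hzmin⟩ := exists_mem_frontier_isMinOn_of_laplacian_nonpos
    (isOpen_ball.sdiff isClosed_closedBall) (isBounded_ball.subset sdiff_subset) hAne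
    ((hcont.mono ((closure_mono sdiff_subset).trans closure_ball_subset_closedBall)).sub
      (hb.continuous.continuousOn.const_smul ε))
    ((hv.mono sdiff_subset).sub (hb.const_smul ε).contDiffOn) fun y hy => by
      have hy' : r / 2 < ‖y - p‖ := by simpa [dist_eq_norm] using hy.2
      have hy'' := pow_lt_pow_left₀ hy' (by positivity) two_ne_zero
      rw [(hv.contDiffAt (isOpen_ball.mem_nhds hy.1)).laplacian_sub (f₂ := ε • hopfBarrier p α)
        (hb.contDiffAt.const_smul ε), laplacian_smul ε hb.contDiffAt, smul_eq_mul]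
      nlinarith [hΔ y hy.1, laplacian_hopfBarrier_pos p α (x := y) hα (by nlinarith)]
  have hx₀z : (v - ε • hopfBarrier p α) x₀ ≤ (v - ε • hopfBarrier p α) z := by
    have hbx₀ := hopfBarrier_pos p α x₀
    simp only [Pi.sub_apply, Pi.smul_apply, smul_eq_mul]
    rcases frontier_ball_sdiff_closedBall_subset p r (r / 2) hz with hzr | hzs
    · have hbz : hopfBarrier p α z = hopfBarrier p α x₀ := by
        simp only [hopfBarrier, ← dist_eq_norm, mem_sphere.1 hzr, mem_sphere.1 hx₀]
      rw [hbz]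
      linarith [isMinOn_iff.1 hmin z (sphere_subset_closedBall hzr)]
    · nlinarith [hinner z hzs, hopfBarrier_le_one p α hα.le z]
  exact isMinOn_iff.2 fun y hy => hx₀z.trans (isMinOn_iff.1 hzmin y (subset_closure hy))

theorem hopf_lemma (hr : 0 < r) (hx₀ : x₀ ∈ sphere p r)
    (hcont : ContinuousOn v (closedBall p r)) (hv : ContDiffOn ℝ 2 v (ball p r))
    (hΔ : ∀ y ∈ ball p r, Δ v y ≤ 0) (hlt : ∀ y ∈ ball p r, v x₀ < v y)
    (hdiff : DifferentiableAt ℝ v x₀) : 0 < fderiv ℝ v x₀ (p - x₀) := by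
  have hx₀r : ‖x₀ - p‖ = r := by simpa [dist_eq_norm] using hx₀
  have hmin : IsMinOn v (closedBall p r) x₀ := by
    rw [← closure_ball p hr.ne'] at hcont ⊢
    exact isMinOn_iff.2 (le_on_closure (fun y hy => (hlt y hy).le) continuousOn_const hcont)
  have : Nontrivial E := nontrivial_of_ne x₀ p (ne_of_mem_sphere hx₀ hr.ne')
  obtain ⟨y₂, hy₂, hy₂min⟩ := (isCompact_sphere p (r / 2)).exists_isMinOn
    (NormedSpace.sphere_nonempty.2 (by positivity))
    (hcont.mono (sphere_subset_closedBall.trans (closedBall_subset_closedBall (by linarith))))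
  set ε := v y₂ - v x₀
  have hε : 0 < ε := sub_pos.2 (hlt y₂ (by simp [mem_sphere.1 hy₂]; linarith))
  set α := ((Module.finrank ℝ E : ℝ) + 1) / (r / 2) ^ 2
  have hα : 0 < α := by positivity
  have hαr : (Module.finrank ℝ E : ℝ) < 2 * α * (r / 2) ^ 2 := by
    have : α * (r / 2) ^ 2 = Module.finrank ℝ E + 1 := div_mul_cancel₀ _ (by positivity)
    rw [mul_assoc, this]; linarith
  have hcmp := isMinOn_sub_smul_hopfBarrier hr hx₀ hcont hv hΔ hmin hα hαr hε.le
    fun y hy => by linarith [isMinOn_iff.1 hy₂min y hy]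
  have hdir : p - x₀ ∈ posTangentConeAt (ball p r \ closedBall p (r / 2)) x₀ := by
    refine mem_posTangentConeAt_of_frequently_mem (Eventually.frequently ?_)
    filter_upwards [Ioo_mem_nhdsGT (by norm_num : (0 : ℝ) < 1 / 2)] with t ht
    have : dist (x₀ + t • (p - x₀)) p = (1 - t) * r := by
      rw [dist_eq_norm, show x₀ + t • (p - x₀) - p = (1 - t) • (x₀ - p) by module, norm_smul,
        hx₀r, Real.norm_of_nonneg (by linarith [ht.2])]
    simp only [Set.mem_sdiff, mem_ball, mem_closedBall, this, not_le]
    constructor <;> nlinarith [ht.1, ht.2]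
  have := hcmp.localize.hasFDerivWithinAt_nonneg
    (hdiff.hasFDerivAt.sub ((hasFDerivAt_hopfBarrier p α x₀).const_smul ε)).hasFDerivWithinAt hdir
  have hinner : inner ℝ (x₀ - p) (p - x₀) = -r ^ 2 := by
    rw [← neg_sub x₀ p, inner_neg_right, real_inner_self_eq_norm_sq, hx₀r]
  simp only [sub_apply, smul_apply, innerSL_apply_apply, hinner, smul_eq_mul] at this
  nlinarith [mul_pos (mul_pos hε hα) (mul_pos (hopfBarrier_pos p α x₀) (pow_pos hr 2))]

variable {Ω : Set E}

theorem eventually_eq_zero_of_nonneg_of_laplacian_nonpos (hΩ : IsOpen Ω)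
    (hv : ContDiffOn ℝ 2 v Ω) (hΔ : ∀ x ∈ Ω, Δ v x ≤ 0) (hnonneg : ∀ x ∈ Ω, 0 ≤ v x) {z : E}
    (hz : z ∈ Ω) (hvz : v z = 0) : ∀ᶠ y in 𝓝 z, v y = 0 := by
  obtain ⟨R, hR, hball⟩ := Metric.isOpen_iff.1 hΩ z hz
  filter_upwards [ball_mem_nhds z (half_pos hR)] with p hp
  by_contra hvp
  have hsub : closedBall p (dist p z) ⊆ Ω := fun y hy => hball <| by
    have := dist_triangle y p z
    rw [mem_ball] at hp ⊢
    rw [mem_closedBall] at hy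
    linarith
  have hvp : 0 < v p := (hnonneg p (hsub (mem_closedBall_self dist_nonneg))).lt_of_ne' hvp
  set K := closedBall p (dist p z) ∩ v ⁻¹' {0}
  have hK : IsClosed K :=
    (hv.continuousOn.mono hsub).preimage_isClosed_of_isClosed isClosed_closedBall
      isClosed_singleton
  have hzK : z ∈ K := ⟨mem_closedBall.2 (dist_comm z p).le, hvz⟩
  obtain ⟨x₀, ⟨-, hvx₀⟩, hx₀⟩ := hK.exists_infDist_eq_dist ⟨z, hzK⟩ p
  rw [mem_preimage, mem_singleton_iff] at hvx₀
  have hr : 0 < dist p x₀ := dist_pos.2 fun h => by simp [h, hvx₀] at hvp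
  have hrz : dist p x₀ ≤ dist p z := hx₀ ▸ infDist_le_dist_of_mem hzK
  have hball' : closedBall p (dist p x₀) ⊆ Ω := (closedBall_subset_closedBall hrz).trans hsub
  have hlt : ∀ y ∈ ball p (dist p x₀), v x₀ < v y := fun y hy => by
    rw [hvx₀]
    refine (hnonneg y (hball' (ball_subset_closedBall hy))).lt_of_ne' fun hvy => ?_
    have := infDist_le_dist_of_mem (x := p)
      (show y ∈ K from ⟨closedBall_subset_closedBall hrz (ball_subset_closedBall hy), hvy⟩)
    rw [mem_ball, dist_comm] at hy
    linarith
  have hx₀Ω : x₀ ∈ Ω := hball' (mem_closedBall.2 (dist_comm x₀ p).le)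
  have hcrit : fderiv ℝ v x₀ = 0 := IsLocalMin.fderiv_eq_zero <|
    Filter.mem_of_superset (hΩ.mem_nhds hx₀Ω) fun y hy => hvx₀ ▸ hnonneg y hy
  have := hopf_lemma hr (mem_sphere.2 (dist_comm x₀ p)) (hv.continuousOn.mono hball')
    (hv.mono (ball_subset_closedBall.trans hball'))
    (fun y hy => hΔ y (hball' (ball_subset_closedBall hy))) hlt
    ((hv.contDiffAt (hΩ.mem_nhds hx₀Ω)).differentiableAt two_ne_zero)
  simp [hcrit] at this

theorem eqOn_zero_of_nonneg_of_laplacian_nonpos (hΩ : IsOpen Ω) (hΩc : IsPreconnected Ω)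
    (hv : ContDiffOn ℝ 2 v Ω) (hΔ : ∀ x ∈ Ω, Δ v x ≤ 0) (hnonneg : ∀ x ∈ Ω, 0 ≤ v x) {x : E}
    (hx : x ∈ Ω) (hvx : v x = 0) : EqOn v 0 Ω := by
  set Z := Ω ∩ v ⁻¹' {0}
  have hZ : IsOpen Z := isOpen_iff_mem_nhds.2 fun z hz => inter_mem (hΩ.mem_nhds hz.1)
    (eventually_eq_zero_of_nonneg_of_laplacian_nonpos hΩ hv hΔ hnonneg hz.1 hz.2)
  have hclosed : closure Z ∩ Ω ⊆ Z := fun y ⟨hyZ, hyΩ⟩ => by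
    have := (hv.continuousOn.continuousAt (hΩ.mem_nhds hyΩ)).continuousWithinAt.mem_closure_image
      hyZ
    exact ⟨hyΩ, closure_minimal (image_subset_iff.2 fun _ h => h.2) isClosed_singleton this⟩
  exact fun y hy => (hΩc.subset_of_closure_inter_subset hZ ⟨x, hx, hx, hvx⟩ hclosed hy).2

end MinimumPrinciple

theorem nonpos_of_isMinOn_of_tendsto_div {F : Type*} [AddCommGroup F] [Module ℝ F]
    {v : F → ℝ} {s : Set F} {x ν : F} {L : ℝ} (hmin : IsMinOn v s x)
    (hseg : ∀ᶠ t in 𝓝[>] (0 : ℝ), x - t • ν ∈ s)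
    (hL : Tendsto (fun t : ℝ => (v x - v (x - t • ν)) / t) (𝓝[>] 0) (𝓝 L)) : L ≤ 0 :=
  le_of_tendsto hL <| by
    filter_upwards [hseg, self_mem_nhdsWithin] with t hts (ht : 0 < t)
    exact div_nonpos_of_nonpos_of_nonneg (sub_nonpos.2 (isMinOn_iff.1 hmin _ hts)) ht.le

theorem positivity_of_harmonic_with_positive_flux_general
    (d : ℕ)
    (Ω : Set (EuclideanSpace ℝ (Fin d)))
    (hΩo : IsOpen Ω) (hΩb : Bornology.IsBounded Ω) (hΩconn : IsConnected Ω)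
    (Γ Sg : Set (EuclideanSpace ℝ (Fin d)))
    (hSgne : Sg.Nonempty)
    (hbd : frontier Ω = Γ ∪ Sg)
    (v : EuclideanSpace ℝ (Fin d) → ℝ)
    (hcont : ContinuousOn v (closure Ω))
    (hsmooth : ContDiffOn ℝ 2 v Ω)
    (hharm : ∀ x ∈ Ω,
      ∑ i, fderiv ℝ (fun y => fderiv ℝ v y (EuclideanSpace.single i (1:ℝ))) x
        (EuclideanSpace.single i (1:ℝ)) = 0)
    (hΓ0 : ∀ x ∈ Γ, v x = 0)
    (ν : EuclideanSpace ℝ (Fin d) → EuclideanSpace ℝ (Fin d))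
    (hν : ∀ x ∈ Sg, ∃ δ : ℝ, 0 < δ ∧ ∀ t ∈ Set.Ioo (0:ℝ) δ, x - t • ν x ∈ Ω)
    (hflux : ∀ x ∈ Sg, ∃ L : ℝ, 0 < L ∧ Filter.Tendsto
      (fun t : ℝ => (v x - v (x - t • ν x)) / t)
      (nhdsWithin 0 (Set.Ioi 0)) (nhds L)) :
    ∀ x ∈ Ω, 0 < v x := by
  intro x hx
  obtain ⟨s, hs⟩ := hSgne
  have hsΩ : s ∈ frontier Ω := hbd ▸ Or.inr hs
  have : Nontrivial (EuclideanSpace ℝ (Fin d)) :=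
    nontrivial_of_ne x s fun h => (hΩo.frontier_eq ▸ hsΩ).2 (h ▸ hx)
  have hΔ : ∀ y ∈ Ω, Δ v y = 0 := fun y hy => by
    rw [laplacian_eq_sum_fderiv_fderiv_apply (hsmooth.contDiffAt (hΩo.mem_nhds hy))
      (EuclideanSpace.basisFun _ ℝ)]
    simpa using hharm y hy
  have hnotmin : ∀ z ∈ Sg, ¬IsMinOn v (closure Ω) z := fun z hz hmin => by
    obtain ⟨δ, hδ, hseg⟩ := hν z hz
    obtain ⟨L, hL, hlim⟩ := hflux z hz
    refine hL.not_ge (nonpos_of_isMinOn_of_tendsto_div hmin ?_ hlim)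
    filter_upwards [Ioo_mem_nhdsGT hδ] with t ht using subset_closure (hseg t ht)
  obtain ⟨z, hz, hzmin⟩ := exists_mem_frontier_isMinOn_of_laplacian_nonpos hΩo hΩb ⟨x, hx⟩
    hcont hsmooth fun y hy => (hΔ y hy).le
  have hzΓ : z ∈ Γ := (hbd ▸ hz : z ∈ Γ ∪ Sg).resolve_right fun hzS => hnotmin z hzS hzmin
  have hnonneg : ∀ y ∈ closure Ω, 0 ≤ v y := fun y hy => hΓ0 z hzΓ ▸ isMinOn_iff.1 hzmin y hy
  refine (hnonneg x (subset_closure hx)).lt_of_ne' fun hvx => hnotmin s hs ?_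
  have hzero : EqOn v 0 Ω := eqOn_zero_of_nonneg_of_laplacian_nonpos hΩo
    hΩconn.isPreconnected hsmooth (fun y hy => (hΔ y hy).le)
    (fun y hy => hnonneg y (subset_closure hy)) hx hvx
  replace hzero := hzero.of_subset_closure hcont continuousOn_const subset_closure subset_rfl
  exact isMinOn_iff.2 fun y hy => by simp [hzero hy, hzero (frontier_subset_closure hsΩ)]

/-- Positivity lemma: if `v` is continuous on the closure of a bounded connected open
set `Ω` whose boundary splits into disjoint pieces `Γ` and `Sg`, `v` is harmonic on `Ω`,
vanishes on `Γ`, and has a strictly positive outward normal derivative at every point of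
`Sg` (in the one-sided-limit sense), then `v > 0` on `Ω`. -/
theorem positivity_of_harmonic_with_positive_flux
    (d : ℕ) (hd : 1 ≤ d)
    (Ω : Set (EuclideanSpace ℝ (Fin d))) (hΩne : Ω.Nonempty)
    (hΩo : IsOpen Ω) (hΩb : Bornology.IsBounded Ω) (hΩconn : IsConnected Ω)
    (Γ Sg : Set (EuclideanSpace ℝ (Fin d)))
    (hΓne : Γ.Nonempty) (hSgne : Sg.Nonempty)
    (hbd : frontier Ω = Γ ∪ Sg) (hdisj : Disjoint Γ Sg)
    (v : EuclideanSpace ℝ (Fin d) → ℝ)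
    (hcont : ContinuousOn v (closure Ω))
    (hsmooth : ContDiffOn ℝ 2 v Ω)
    (hharm : ∀ x ∈ Ω,
      ∑ i, fderiv ℝ (fun y => fderiv ℝ v y (EuclideanSpace.single i (1:ℝ))) x
        (EuclideanSpace.single i (1:ℝ)) = 0)
    (hΓ0 : ∀ x ∈ Γ, v x = 0)
    (ν : EuclideanSpace ℝ (Fin d) → EuclideanSpace ℝ (Fin d))
    (hν : ∀ x ∈ Sg, ∃ δ : ℝ, 0 < δ ∧ ∀ t ∈ Set.Ioo (0:ℝ) δ, x - t • ν x ∈ Ω)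
    (hflux : ∀ x ∈ Sg, ∃ L : ℝ, 0 < L ∧ Filter.Tendsto
      (fun t : ℝ => (v x - v (x - t • ν x)) / t)
      (nhdsWithin 0 (Set.Ioi 0)) (nhds L)) :
    ∀ x ∈ Ω, 0 < v x :=
  positivity_of_harmonic_with_positive_flux_general d Ω hΩo hΩb hΩconn Γ Sg hSgne hbd v hcont
    hsmooth hharm hΓ0 ν hν hflux
end

section
/- Fix real constants r*, R, f with 0 < r* < R and f > 0, and define F₁(r) = − f·(log r − log r*) / (r · log(R/r*) · (log R − log r)) for r ∈ (0, R). Let T > 0, let r₀ ∈ (r*, R), and let r : ℝ → ℝ satisfy r(0) = r₀, r(t) ∈ (0, R) for all t ∈ [0, T], and suppose r has derivative F₁(r(t)) at every t ∈ [0, T]. Then r(t) > r* for every t ∈ [0, T] (the evolving radius never reaches r* in finite time), and r′(t) = F₁(r(t)) < 0 for every t ∈ [0, T] (the radius is strictly decreasing). -/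
/-!
`F₁` vanishes at `r*` and is smooth, hence locally Lipschitz, on `(0, R)`. By uniqueness of
solutions, a trajectory that reached the equilibrium `r*` at some time would coincide with the
constant solution `r*` before it, contradicting `r(0) = r₀ > r*`; by the intermediate value
theorem the trajectory therefore stays above `r*`, where every factor of `F₁` has a definite
sign and `F₁ < 0`.
-/

open Set Real

theorem eqOn_const_of_hasDerivAt_of_eq_equilibrium {E : Type*} [NormedAddCommGroup E]
    [NormedSpace ℝ E] {F : E → E} {U : Set E} {x : ℝ → E} {a b : ℝ} {p : E}
    (hF : LocallyLipschitzOn U F) (hpU : p ∈ U) (hFp : F p = 0)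
    (hx : ∀ t ∈ Icc a b, HasDerivAt x (F (x t)) t) (hxU : ∀ t ∈ Icc a b, x t ∈ U)
    (hxb : x b = p) : EqOn x (fun _ ↦ p) (Icc a b) := by
  have hxc : ContinuousOn x (Icc a b) := fun t ht ↦ (hx t ht).continuousAt.continuousWithinAt
  obtain ⟨K, hK⟩ := LocallyLipschitzOn.exists_lipschitzOnWith_of_compact
    ((isCompact_Icc.image_of_continuousOn hxc).insert p)
    (hF.mono (insert_subset hpU (image_subset_iff.2 hxU)))
  refine ODE_solution_unique_of_mem_Icc_left (v := fun _ ↦ F) (fun _ _ ↦ hK) hxc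
    (fun t ht ↦ (hx t (Ioc_subset_Icc_self ht)).hasDerivWithinAt)
    (fun t ht ↦ mem_insert_of_mem _ (mem_image_of_mem x (Ioc_subset_Icc_self ht)))
    continuousOn_const (fun _ _ ↦ ?_) (fun _ _ ↦ mem_insert p _) hxb
  simpa [hFp] using hasDerivWithinAt_const _ _ p

theorem equilibrium_lt_of_hasDerivAt_of_equilibrium_lt {F : ℝ → ℝ} {U : Set ℝ} {x : ℝ → ℝ}
    {a b p : ℝ} (hF : LocallyLipschitzOn U F) (hpU : p ∈ U) (hFp : F p = 0)
    (hx : ∀ t ∈ Icc a b, HasDerivAt x (F (x t)) t) (hxU : ∀ t ∈ Icc a b, x t ∈ U)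
    (hxa : p < x a) : ∀ t ∈ Icc a b, p < x t := by
  intro t ht
  by_contra! hxt
  have hsub : Icc a t ⊆ Icc a b := Icc_subset_Icc_right ht.2
  obtain ⟨s, hs, hxs⟩ : p ∈ x '' Icc a t :=
    intermediate_value_Icc' ht.1 (fun u hu ↦ (hx u (hsub hu)).continuousAt.continuousWithinAt)
      ⟨hxt, hxa.le⟩
  have hxa' : x a = p := eqOn_const_of_hasDerivAt_of_eq_equilibrium hF hpU hFp
    (fun u hu ↦ hx u (hsub (Icc_subset_Icc_right hs.2 hu)))
    (fun u hu ↦ hxU u (hsub (Icc_subset_Icc_right hs.2 hu))) hxs (left_mem_Icc.2 hs.1)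
  exact hxa.ne' hxa'

noncomputable def radialVelocity (rstar R f r : ℝ) : ℝ :=
  -(f * (log r - log rstar)) / (r * log (R / rstar) * (log R - log r))

theorem radialVelocity_self (rstar R f : ℝ) : radialVelocity rstar R f rstar = 0 := by
  simp [radialVelocity]

theorem contDiffOn_radialVelocity {rstar R : ℝ} (h1 : 0 < rstar) (h2 : rstar < R) (f : ℝ) :
    ContDiffOn ℝ 1 (radialVelocity rstar R f) (Ioo 0 R) := by
  have hL : log (R / rstar) ≠ 0 := (log_pos ((one_lt_div h1).2 h2)).ne'
  intro r hr
  have hr0 : r ≠ 0 := hr.1.ne'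
  have hlog : ContDiffWithinAt ℝ 1 log (Ioo 0 R) r := (contDiffAt_log.2 hr0).contDiffWithinAt
  refine ContDiffWithinAt.div (by fun_prop) ?_ ?_
  · fun_prop
  · exact mul_ne_zero (mul_ne_zero hr0 hL) (sub_ne_zero.2 (log_lt_log hr.1 hr.2).ne')

theorem radialVelocity_neg {rstar R f r : ℝ} (h1 : 0 < rstar) (h2 : rstar < R) (hf : 0 < f)
    (hr : r ∈ Ioo rstar R) : radialVelocity rstar R f r < 0 := by
  have hL : 0 < log (R / rstar) := log_pos ((one_lt_div h1).2 h2)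
  have hr0 : 0 < r := h1.trans hr.1
  have hnum : 0 < f * (log r - log rstar) := mul_pos hf (sub_pos.2 (log_lt_log h1 hr.1))
  have hden : 0 < r * log (R / rstar) * (log R - log r) :=
    mul_pos (mul_pos hr0 hL) (sub_pos.2 (log_lt_log hr0 hr.2))
  exact div_neg_of_neg_of_pos (neg_neg_of_pos hnum) hden

theorem F1_ode_solution_stays_above_rstar_and_decreases_general
    (rstar R f : ℝ) (h1 : 0 < rstar) (h2 : rstar < R) (hf : 0 < f)
    (F1 : ℝ → ℝ)
    (hF1 : ∀ r, F1 r = -(f * (Real.log r - Real.log rstar)) /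
      (r * Real.log (R / rstar) * (Real.log R - Real.log r)))
    (T : ℝ)
    (r₀ : ℝ) (hr₀ : r₀ ∈ Set.Ioo rstar R)
    (r : ℝ → ℝ) (hinit : r 0 = r₀)
    (hrange : ∀ t ∈ Set.Icc (0:ℝ) T, r t ∈ Set.Ioo (0:ℝ) R)
    (hode : ∀ t ∈ Set.Icc (0:ℝ) T, HasDerivAt r (F1 (r t)) t) :
    ∀ t ∈ Set.Icc (0:ℝ) T, rstar < r t ∧ F1 (r t) < 0 := by
  obtain rfl : F1 = radialVelocity rstar R f := funext hF1
  have habove : ∀ t ∈ Icc 0 T, rstar < r t :=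
    equilibrium_lt_of_hasDerivAt_of_equilibrium_lt
      ((contDiffOn_radialVelocity h1 h2 f).locallyLipschitzOn (convex_Ioo 0 R)) ⟨h1, h2⟩
      (radialVelocity_self rstar R f) hode hrange (hinit ▸ hr₀.1)
  exact fun t ht ↦ ⟨habove t ht, radialVelocity_neg h1 h2 hf ⟨habove t ht, (hrange t ht).2⟩⟩

/-- Any solution of the two-dimensional concentric-circles ODE `r′ = F₁(r)` starting in
`(r*, R)` stays strictly above `r*` for all time in `[0, T]` and is strictly
decreasing there (`F₁(r(t)) < 0`). -/
theorem F1_ode_solution_stays_above_rstar_and_decreases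
    (rstar R f : ℝ) (h1 : 0 < rstar) (h2 : rstar < R) (hf : 0 < f)
    (F1 : ℝ → ℝ)
    (hF1 : ∀ r, F1 r = -(f * (Real.log r - Real.log rstar)) /
      (r * Real.log (R / rstar) * (Real.log R - Real.log r)))
    (T : ℝ) (hT : 0 < T)
    (r₀ : ℝ) (hr₀ : r₀ ∈ Set.Ioo rstar R)
    (r : ℝ → ℝ) (hinit : r 0 = r₀)
    (hrange : ∀ t ∈ Set.Icc (0:ℝ) T, r t ∈ Set.Ioo (0:ℝ) R)
    (hode : ∀ t ∈ Set.Icc (0:ℝ) T, HasDerivAt r (F1 (r t)) t) :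
    ∀ t ∈ Set.Icc (0:ℝ) T, rstar < r t ∧ F1 (r t) < 0 :=
  F1_ode_solution_stays_above_rstar_and_decreases_general rstar R f h1 h2 hf F1 hF1 T r₀ hr₀ r hinit
    hrange hode
end

section
/- Fix real constants r*, R, f with 0 < r* < R and f > 0, and define F₂(r) = − f·R²·(r − r*) / (r²·(R − r)·(R − r*)) for r ∈ (0, R). Let T > 0, let r₀ ∈ (r*, R), and let r : ℝ → ℝ satisfy r(0) = r₀, r(t) ∈ (0, R) for all t ∈ [0, T], and suppose r has derivative F₂(r(t)) at every t ∈ [0, T]. Then r(t) > r* for every t ∈ [0, T] (the evolving radius never reaches r* in finite time), and r′(t) = F₂(r(t)) < 0 for every t ∈ [0, T] (the radius is strictly decreasing). -/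
/-!
`F₂` is smooth on `(0, R)`, hence locally Lipschitz there, and vanishes at `r*`. By uniqueness of
solutions, a trajectory that reached the equilibrium `r*` at some time would coincide with the
constant solution `r*` up to that time, contradicting `r(0) > r*`; by the intermediate value
theorem the trajectory therefore stays above `r*`, where `F₂ < 0`.
-/

open Set

section Equilibrium

variable {v : ℝ → ℝ} {U : Set ℝ} {e : ℝ} {x : ℝ → ℝ} {a b : ℝ}

theorem ODE_apply_left_eq_of_apply_right_eq_equilibrium (hv : LocallyLipschitzOn U v)
    (he : v e = 0) (hab : a ≤ b) (hx : ∀ t ∈ Icc a b, HasDerivAt x (v (x t)) t)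
    (hxU : ∀ t ∈ Icc a b, x t ∈ U) (hxb : x b = e) : x a = e := by
  have hcont : ContinuousOn x (Icc a b) := fun t ht => (hx t ht).continuousAt.continuousWithinAt
  set K := x '' Icc a b
  have hKU : K ⊆ U := image_subset_iff.2 hxU
  obtain ⟨L, hL⟩ := (hv.mono hKU).exists_lipschitzOnWith_of_compact
    (isCompact_Icc.image_of_continuousOn hcont)
  have hxK : ∀ t ∈ Ioc a b, x t ∈ K := fun t ht => mem_image_of_mem x (Ioc_subset_Icc_self ht)
  have heK : e ∈ K := hxb ▸ mem_image_of_mem x (right_mem_Icc.2 hab)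
  have hconst : ∀ t ∈ Ioc a b, HasDerivWithinAt (fun _ => e) (v e) (Iic t) t := fun t _ => by
    rw [he]; exact hasDerivWithinAt_const t _ e
  exact ODE_solution_unique_of_mem_Icc_left (v := fun _ => v) (s := fun _ => K)
    (fun _ _ => hL) hcont (fun t ht => (hx t (Ioc_subset_Icc_self ht)).hasDerivWithinAt) hxK
    continuousOn_const hconst (fun _ _ => heK) hxb (left_mem_Icc.2 hab)

theorem ODE_equilibrium_lt_of_equilibrium_lt_left (hv : LocallyLipschitzOn U v) (he : v e = 0)
    (hx : ∀ t ∈ Icc a b, HasDerivAt x (v (x t)) t) (hxU : ∀ t ∈ Icc a b, x t ∈ U)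
    (hxa : e < x a) : ∀ t ∈ Icc a b, e < x t := by
  intro t ht
  by_contra! hxt
  have hsub : Icc a t ⊆ Icc a b := Icc_subset_Icc_right ht.2
  have hcont : ContinuousOn x (Icc a t) :=
    fun s hs => (hx s (hsub hs)).continuousAt.continuousWithinAt
  obtain ⟨s, hs, hxs⟩ := intermediate_value_Icc' ht.1 hcont ⟨hxt, hxa.le⟩
  have hsub' : Icc a s ⊆ Icc a b := (Icc_subset_Icc_right hs.2).trans hsub
  exact hxa.ne' <| ODE_apply_left_eq_of_apply_right_eq_equilibrium hv he hs.1
    (fun u hu => hx u (hsub' hu)) (fun u hu => hxU u (hsub' hu)) hxs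

end Equilibrium

/-- `F₂(r)` of the paper. -/
noncomputable def concentricSpheresVelocity (rstar R f r : ℝ) : ℝ :=
  -(f * R ^ 2 * (r - rstar)) / (r ^ 2 * (R - r) * (R - rstar))

section ConcentricSpheres

variable {rstar R f : ℝ}

theorem concentricSpheresVelocity_rstar : concentricSpheresVelocity rstar R f rstar = 0 := by
  simp [concentricSpheresVelocity]

theorem locallyLipschitzOn_concentricSpheresVelocity (h : rstar < R) :
    LocallyLipschitzOn (Ioo 0 R) (concentricSpheresVelocity rstar R f) := by
  refine (ContDiffOn.div (by fun_prop) (by fun_prop) ?_).locallyLipschitzOn (convex_Ioo 0 R)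
  rintro r ⟨hr0, hrR⟩
  exact (mul_pos (mul_pos (pow_pos hr0 2) (sub_pos.2 hrR)) (sub_pos.2 h)).ne'

theorem concentricSpheresVelocity_neg (hf : 0 < f) {r : ℝ} (hr : r ∈ Ioo rstar R)
    (hr0 : 0 < r) : concentricSpheresVelocity rstar R f r < 0 := by
  obtain ⟨hlo, hhi⟩ := hr
  have hR : 0 < R := hr0.trans hhi
  apply div_neg_of_neg_of_pos
  · have := mul_pos (mul_pos hf (pow_pos hR 2)) (sub_pos.2 hlo)
    linarith
  · exact mul_pos (mul_pos (pow_pos hr0 2) (by linarith)) (by linarith)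

end ConcentricSpheres

theorem F2_ode_solution_stays_above_rstar_and_decreases_general
    (rstar R f : ℝ) (h2 : rstar < R) (hf : 0 < f)
    (F2 : ℝ → ℝ)
    (hF2 : ∀ r, F2 r = -(f * R ^ 2 * (r - rstar)) /
      (r ^ 2 * (R - r) * (R - rstar)))
    (T : ℝ)
    (r₀ : ℝ) (hr₀ : r₀ ∈ Set.Ioo rstar R)
    (r : ℝ → ℝ) (hinit : r 0 = r₀)
    (hrange : ∀ t ∈ Set.Icc (0:ℝ) T, r t ∈ Set.Ioo (0:ℝ) R)
    (hode : ∀ t ∈ Set.Icc (0:ℝ) T, HasDerivAt r (F2 (r t)) t) :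
    ∀ t ∈ Set.Icc (0:ℝ) T, rstar < r t ∧ F2 (r t) < 0 := by
  have hF2 : F2 = concentricSpheresVelocity rstar R f := funext hF2
  subst hF2
  have habove : ∀ t ∈ Icc (0:ℝ) T, rstar < r t :=
    ODE_equilibrium_lt_of_equilibrium_lt_left (locallyLipschitzOn_concentricSpheresVelocity h2)
      concentricSpheresVelocity_rstar hode hrange (hinit ▸ hr₀.1)
  intro t ht
  exact ⟨habove t ht,
    concentricSpheresVelocity_neg hf ⟨habove t ht, (hrange t ht).2⟩ (hrange t ht).1⟩

/-- Any solution of the three-dimensional concentric-spheres ODE `r′ = F₂(r)` starting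
in `(r*, R)` stays strictly above `r*` for all time in `[0, T]` and is strictly
decreasing there (`F₂(r(t)) < 0`). -/
theorem F2_ode_solution_stays_above_rstar_and_decreases
    (rstar R f : ℝ) (h1 : 0 < rstar) (h2 : rstar < R) (hf : 0 < f)
    (F2 : ℝ → ℝ)
    (hF2 : ∀ r, F2 r = -(f * R ^ 2 * (r - rstar)) /
      (r ^ 2 * (R - r) * (R - rstar)))
    (T : ℝ) (hT : 0 < T)
    (r₀ : ℝ) (hr₀ : r₀ ∈ Set.Ioo rstar R)
    (r : ℝ → ℝ) (hinit : r 0 = r₀)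
    (hrange : ∀ t ∈ Set.Icc (0:ℝ) T, r t ∈ Set.Ioo (0:ℝ) R)
    (hode : ∀ t ∈ Set.Icc (0:ℝ) T, HasDerivAt r (F2 (r t)) t) :
    ∀ t ∈ Set.Icc (0:ℝ) T, rstar < r t ∧ F2 (r t) < 0 :=
  F2_ode_solution_stays_above_rstar_and_decreases_general rstar R f h2 hf F2 hF2 T r₀ hr₀ r hinit
    hrange hode
end
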